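/- arXiv:1611.03958 — 4 statements merged into one kernel-verified Lean document; each statement's English description precedes it below -/
import Mathlib

section
/- Let v > 0, T > 0, R > 0, let q₁, P_f : [0,1]² → ℝ be continuous, and let ρ*, λ : [0,1] × [0,T] → ℝ be continuously differentiable, satisfying the necessary conditions of Theorem 1: ∂_t ρ* + v·∂_z ρ* = 0; ∂_t λ + v·∂_z λ + ∫₀¹ q₁(z,y) ρ*(y,t) dy = 0; λ(1,t) = 0; ρ*(z,0) = ρ₀(z); λ(z,T) = ∫₀¹ P_f(z,y) ρ*(y,T) dy; and the optimal control u*(t) := v·ρ*(0,t) = −(1/R)·λ(0,t). Then the optimal cost admits the representation J(ρ*,u*) = (1/2)·∫₀¹ λ(z,0) ρ₀(z) dz. -/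
open Set MeasureTheory

lemma ftc_icc' {a b : ℝ} (hab : a ≤ b) {g g' : ℝ → ℝ}
    (hg : ContinuousOn g (Icc a b)) (hg' : ContinuousOn g' (Icc a b))
    (hd : ∀ x ∈ Icc a b, HasDerivWithinAt g (g' x) (Icc a b) x) :
    ∫ x in a..b, g' x = g b - g a := by
  refine intervalIntegral.integral_eq_sub_of_hasDeriv_right_of_le hab hg
    (fun x hx => ?_) (hg'.intervalIntegrable_of_Icc hab)
  exact ((hd x (Ioo_subset_Icc_self hx)).hasDerivAt
    (Icc_mem_nhds hx.1 hx.2)).hasDerivWithinAt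

/-- under the necessary conditions of optimality of Theorem 1 (state
equation `∂_t ρ* + v·∂_z ρ* = 0`, co-state equation
`∂_t λ + v·∂_z λ + ∫₀¹ q₁(z,y) ρ*(y,t) dy = 0`, boundary condition `λ(1,t) = 0`,
initial condition `ρ*(·,0) = ρ₀`, terminal condition `λ(z,T) = ∫₀¹ P_f(z,y) ρ*(y,T) dy`
and optimal control `u*(t) = v·ρ*(0,t) = -(1/R)·λ(0,t)`), the optimal cost satisfies
`J(ρ*,u*) = (1/2)·∫₀¹ λ(z,0) ρ₀(z) dz`. -/
theorem optimal_cost_representation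
    (v T R : ℝ) (hv : 0 < v) (hT : 0 < T) (hR : 0 < R)
    (q₁ Pf : ℝ → ℝ → ℝ)
    (hq₁ : ContinuousOn (fun p : ℝ × ℝ => q₁ p.1 p.2) (Icc 0 1 ×ˢ Icc 0 1))
    (hPf : ContinuousOn (fun p : ℝ × ℝ => Pf p.1 p.2) (Icc 0 1 ×ˢ Icc 0 1))
    (ρ ρz ρt l lz lt : ℝ → ℝ → ℝ)
    (hρc : ContinuousOn (fun p : ℝ × ℝ => ρ p.1 p.2) (Icc 0 1 ×ˢ Icc 0 T))
    (hρzc : ContinuousOn (fun p : ℝ × ℝ => ρz p.1 p.2) (Icc 0 1 ×ˢ Icc 0 T))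
    (hρtc : ContinuousOn (fun p : ℝ × ℝ => ρt p.1 p.2) (Icc 0 1 ×ˢ Icc 0 T))
    (hlc : ContinuousOn (fun p : ℝ × ℝ => l p.1 p.2) (Icc 0 1 ×ˢ Icc 0 T))
    (hlzc : ContinuousOn (fun p : ℝ × ℝ => lz p.1 p.2) (Icc 0 1 ×ˢ Icc 0 T))
    (hltc : ContinuousOn (fun p : ℝ × ℝ => lt p.1 p.2) (Icc 0 1 ×ˢ Icc 0 T))
    (hρz : ∀ t ∈ Icc (0:ℝ) T, ∀ z ∈ Icc (0:ℝ) 1,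
      HasDerivWithinAt (fun z' => ρ z' t) (ρz z t) (Icc 0 1) z)
    (hρt : ∀ z ∈ Icc (0:ℝ) 1, ∀ t ∈ Icc (0:ℝ) T,
      HasDerivWithinAt (fun t' => ρ z t') (ρt z t) (Icc 0 T) t)
    (hlz : ∀ t ∈ Icc (0:ℝ) T, ∀ z ∈ Icc (0:ℝ) 1,
      HasDerivWithinAt (fun z' => l z' t) (lz z t) (Icc 0 1) z)
    (hlt : ∀ z ∈ Icc (0:ℝ) 1, ∀ t ∈ Icc (0:ℝ) T,
      HasDerivWithinAt (fun t' => l z t') (lt z t) (Icc 0 T) t)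
    (htransport : ∀ z ∈ Icc (0:ℝ) 1, ∀ t ∈ Icc (0:ℝ) T, ρt z t + v * ρz z t = 0)
    (hcostate : ∀ z ∈ Icc (0:ℝ) 1, ∀ t ∈ Icc (0:ℝ) T,
      lt z t + v * lz z t + (∫ y in (0:ℝ)..1, q₁ z y * ρ y t) = 0)
    (hlbc : ∀ t ∈ Icc (0:ℝ) T, l 1 t = 0)
    (ρ₀ : ℝ → ℝ) (hinit : ∀ z ∈ Icc (0:ℝ) 1, ρ z 0 = ρ₀ z)
    (hterm : ∀ z ∈ Icc (0:ℝ) 1, l z T = ∫ y in (0:ℝ)..1, Pf z y * ρ y T)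
    (u : ℝ → ℝ) (hu : ∀ t, u t = v * ρ 0 t)
    (hopt : ∀ t ∈ Icc (0:ℝ) T, u t = -(1 / R) * l 0 t)
    (J : ℝ)
    (hJ : J = (1 / 2) * (∫ t in (0:ℝ)..T,
        ((∫ z in (0:ℝ)..1, ∫ y in (0:ℝ)..1, q₁ z y * ρ y t * ρ z t) + R * u t ^ 2)) +
      (1 / 2) * ∫ z in (0:ℝ)..1, ∫ y in (0:ℝ)..1, Pf z y * ρ y T * ρ z T) :
    J = (1 / 2) * ∫ z in (0:ℝ)..1, l z 0 * ρ₀ z := by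
  -- slice continuity helpers
  have slicez : ∀ (f : ℝ → ℝ → ℝ),
      ContinuousOn (fun p : ℝ × ℝ => f p.1 p.2) (Icc 0 1 ×ˢ Icc 0 T) →
      ∀ t ∈ Icc (0:ℝ) T, ContinuousOn (fun z => f z t) (Icc 0 1) := fun f hf t ht =>
    hf.comp (continuous_id.prodMk continuous_const).continuousOn
      (fun z hz => ⟨hz, ht⟩)
  have slicet : ∀ (f : ℝ → ℝ → ℝ),
      ContinuousOn (fun p : ℝ × ℝ => f p.1 p.2) (Icc 0 1 ×ˢ Icc 0 T) →
      ∀ z ∈ Icc (0:ℝ) 1, ContinuousOn (fun t => f z t) (Icc 0 T) := fun f hf z hz =>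
    hf.comp (continuous_const.prodMk continuous_id).continuousOn
      (fun t ht => ⟨hz, ht⟩)
  set F : ℝ → ℝ → ℝ := fun z t => lt z t * ρ z t + l z t * ρt z t with hF
  set E0 : ℝ := ∫ z in (0:ℝ)..1, l z 0 * ρ z 0 with hE0
  set ET : ℝ := ∫ z in (0:ℝ)..1, l z T * ρ z T with hET
  have h01 : (0:ℝ) ∈ Icc (0:ℝ) 1 := ⟨le_refl 0, zero_le_one⟩
  have h11 : (1:ℝ) ∈ Icc (0:ℝ) 1 := ⟨zero_le_one, le_refl 1⟩
  have h0T : (0:ℝ) ∈ Icc (0:ℝ) T := ⟨le_refl 0, hT.le⟩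
  have hTT : T ∈ Icc (0:ℝ) T := ⟨hT.le, le_refl T⟩
  -- Step 1 : key per-time identity
  have key : ∀ t ∈ Icc (0:ℝ) T,
      (∫ z in (0:ℝ)..1, ∫ y in (0:ℝ)..1, q₁ z y * ρ y t * ρ z t) + R * u t ^ 2
        = -(∫ z in (0:ℝ)..1, F z t) := by
    intro t ht
    have e1 : (∫ z in (0:ℝ)..1, ∫ y in (0:ℝ)..1, q₁ z y * ρ y t * ρ z t)
        = ∫ z in (0:ℝ)..1, (-(lt z t + v * lz z t)) * ρ z t := by
      refine intervalIntegral.integral_congr (fun z hz => ?_)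
      rw [uIcc_of_le zero_le_one] at hz
      rw [intervalIntegral.integral_mul_const]
      have hc := hcostate z hz t ht
      have : (∫ y in (0:ℝ)..1, q₁ z y * ρ y t) = -(lt z t + v * lz z t) := by linarith
      rw [this]
    have iX : IntervalIntegrable (fun z => (-(lt z t + v * lz z t)) * ρ z t) volume 0 1 :=
      ((((slicez lt hltc t ht).add ((slicez lz hlzc t ht).const_smul v)).neg).mul
        (slicez ρ hρc t ht)).intervalIntegrable_of_Icc zero_le_one
    have iF : IntervalIntegrable (fun z => F z t) volume 0 1 :=
      (((slicez lt hltc t ht).mul (slicez ρ hρc t ht)).add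
        ((slicez l hlc t ht).mul (slicez ρt hρtc t ht))).intervalIntegrable_of_Icc zero_le_one
    have e2 : (∫ z in (0:ℝ)..1, (-(lt z t + v * lz z t)) * ρ z t)
          + (∫ z in (0:ℝ)..1, F z t)
        = ∫ z in (0:ℝ)..1, (-v) * (lz z t * ρ z t + l z t * ρz z t) := by
      rw [← intervalIntegral.integral_add iX iF]
      refine intervalIntegral.integral_congr (fun z hz => ?_)
      rw [uIcc_of_le zero_le_one] at hz
      have htr := htransport z hz t ht
      have : ρt z t = -(v * ρz z t) := by linarith
      simp only [hF]
      rw [this]; ring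
    have e3 : (∫ z in (0:ℝ)..1, lz z t * ρ z t + l z t * ρz z t)
        = l 1 t * ρ 1 t - l 0 t * ρ 0 t := by
      refine ftc_icc' zero_le_one
        ((slicez l hlc t ht).mul (slicez ρ hρc t ht))
        (((slicez lz hlzc t ht).mul (slicez ρ hρc t ht)).add
          ((slicez l hlc t ht).mul (slicez ρz hρzc t ht)))
        (fun z hz => (hlz t ht z hz).mul (hρz t ht z hz))
    have hl0 : l 0 t = -(R * u t) := by
      have := hopt t ht
      field_simp at this
      linarith
    have hfin : (∫ z in (0:ℝ)..1, F z t) = - R * u t ^ 2 - 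
        (∫ z in (0:ℝ)..1, (-(lt z t + v * lz z t)) * ρ z t) := by
      have : (∫ z in (0:ℝ)..1, (-(lt z t + v * lz z t)) * ρ z t)
            + (∫ z in (0:ℝ)..1, F z t) = -R * u t ^ 2 := by
        rw [e2, intervalIntegral.integral_const_mul, e3, hlbc t ht, hl0, hu t]
        ring
      linarith
    rw [e1, hfin]
    ring
  -- Step 2 : Fubini
  have hswap : ∀ (f : ℝ → ℝ → ℝ),
      ContinuousOn (fun p : ℝ × ℝ => f p.1 p.2) (Icc 0 1 ×ˢ Icc 0 T) →
      ContinuousOn (fun p : ℝ × ℝ => f p.2 p.1) (Icc 0 T ×ˢ Icc 0 1) := fun f hf =>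
    hf.comp continuous_swap.continuousOn (fun p hp => ⟨hp.2, hp.1⟩)
  have hFcont : ContinuousOn (fun p : ℝ × ℝ => F p.2 p.1) (Icc 0 T ×ˢ Icc 0 1) :=
    ((hswap lt hltc).mul (hswap ρ hρc)).add ((hswap l hlc).mul (hswap ρt hρtc))
  have hFint : IntegrableOn (fun p : ℝ × ℝ => F p.2 p.1) (Icc 0 T ×ˢ Icc 0 1) volume :=
    hFcont.integrableOn_compact (isCompact_Icc.prod isCompact_Icc)
  have fubini : (∫ t in (0:ℝ)..T, ∫ z in (0:ℝ)..1, F z t)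
      = ∫ z in (0:ℝ)..1, ∫ t in (0:ℝ)..T, F z t := by
    rw [intervalIntegral.integral_of_le hT.le, intervalIntegral.integral_of_le zero_le_one]
    simp only [intervalIntegral.integral_of_le zero_le_one,
      intervalIntegral.integral_of_le hT.le]
    refine MeasureTheory.integral_integral_swap ?_
    rw [Measure.prod_restrict]
    have : IntegrableOn (Function.uncurry fun t z => F z t) (Icc 0 T ×ˢ Icc 0 1)
        (volume.prod volume) := by
      rw [← Measure.volume_eq_prod]
      exact hFint
    exact this.mono_set (prod_mono Ioc_subset_Icc_self Ioc_subset_Icc_self)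
  -- Step 3 : FTC in time
  have tftc : ∀ z ∈ Icc (0:ℝ) 1,
      (∫ t in (0:ℝ)..T, F z t) = l z T * ρ z T - l z 0 * ρ z 0 := by
    intro z hz
    exact ftc_icc' hT.le
      ((slicet l hlc z hz).mul (slicet ρ hρc z hz))
      (((slicet lt hltc z hz).mul (slicet ρ hρc z hz)).add
        ((slicet l hlc z hz).mul (slicet ρt hρtc z hz)))
      (fun t ht => (hlt z hz t ht).mul (hρt z hz t ht))
  have step3 : (∫ z in (0:ℝ)..1, ∫ t in (0:ℝ)..T, F z t) = ET - E0 := by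
    have e : (∫ z in (0:ℝ)..1, ∫ t in (0:ℝ)..T, F z t)
        = ∫ z in (0:ℝ)..1, (l z T * ρ z T - l z 0 * ρ z 0) := by
      refine intervalIntegral.integral_congr (fun z hz => ?_)
      rw [uIcc_of_le zero_le_one] at hz
      exact tftc z hz
    rw [e, intervalIntegral.integral_sub (f := fun z => l z T * ρ z T) (g := fun z => l z 0 * ρ z 0)
      (((slicez l hlc T hTT).mul (slicez ρ hρc T hTT)).intervalIntegrable_of_Icc zero_le_one)
      (((slicez l hlc 0 h0T).mul (slicez ρ hρc 0 h0T)).intervalIntegrable_of_Icc zero_le_one)]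
  -- terminal cost equals ET
  have hPT : (∫ z in (0:ℝ)..1, ∫ y in (0:ℝ)..1, Pf z y * ρ y T * ρ z T) = ET := by
    refine intervalIntegral.integral_congr (fun z hz => ?_)
    rw [uIcc_of_le zero_le_one] at hz
    rw [intervalIntegral.integral_mul_const, ← hterm z hz]
  -- running cost integral
  have hrun : (∫ t in (0:ℝ)..T,
      ((∫ z in (0:ℝ)..1, ∫ y in (0:ℝ)..1, q₁ z y * ρ y t * ρ z t) + R * u t ^ 2))
      = E0 - ET := by
    have e : (∫ t in (0:ℝ)..T,
        ((∫ z in (0:ℝ)..1, ∫ y in (0:ℝ)..1, q₁ z y * ρ y t * ρ z t) + R * u t ^ 2))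
        = ∫ t in (0:ℝ)..T, -(∫ z in (0:ℝ)..1, F z t) := by
      refine intervalIntegral.integral_congr (fun t ht => ?_)
      rw [uIcc_of_le hT.le] at ht
      exact key t ht
    rw [e, intervalIntegral.integral_neg, fubini, step3]
    ring
  -- initial integral
  have hE0' : E0 = ∫ z in (0:ℝ)..1, l z 0 * ρ₀ z := by
    refine intervalIntegral.integral_congr (fun z hz => ?_)
    rw [uIcc_of_le zero_le_one] at hz
    rw [hinit z hz]
  rw [hJ, hrun, hPT, ← hE0']
  ring
end

section
/- (Theorem 2, verification form.) Let v > 0, T > 0, R > 0, let q₁, P_f : [0,1]² → ℝ be continuous, and let P : [0,1] × [0,1] × [0,T] → ℝ be continuously differentiable and solve the differential Riccati equation ∂_t P(z,y,t) + v·∂_z P(z,y,t) + v·∂_y P(z,y,t) + q₁(z,y) − (1/R)·P(z,0,t)·P(0,y,t) = 0 with boundary conditions P(z,1,t) = 0 and P(1,y,t) = 0 and terminal condition P(z,y,T) = P_f(z,y). Let ρ* : [0,1] × [0,T] → ℝ be continuously differentiable, solve ∂_t ρ* + v·∂_z ρ* = 0, and satisfy the state-feedback boundary condition v·ρ*(0,t)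 = −(1/R)·∫₀¹ P(0,y,t) ρ*(y,t) dy. Then λ(z,t) := ∫₀¹ P(z,y,t) ρ*(y,t) dy satisfies the co-state equation ∂_t λ(z,t) + v·∂_z λ(z,t) + ∫₀¹ q₁(z,y) ρ*(y,t) dy = 0, the boundary condition λ(1,t) = 0, the terminal condition λ(z,T) = ∫₀¹ P_f(z,y) ρ*(y,T) dy, and the feedback control equals u*(t) = −(1/R)·λ(0,t). -/
open Set MeasureTheory intervalIntegral

/-- Interval integrability from continuity on `Icc a b` when `a ≤ b`. -/
lemma contOn_intervalIntegrable {g : ℝ → ℝ} {a b : ℝ} (hab : a ≤ b)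
    (hg : ContinuousOn g (Icc a b)) : IntervalIntegrable g volume a b :=
  (by rwa [uIcc_of_le hab] : ContinuousOn g (uIcc a b)).intervalIntegrable

/-- FTC representation on `[a, u] ⊆ [a, b]` from within-derivatives on `Icc a b`. -/
lemma ftc_rep {a b : ℝ} {f f' : ℝ → ℝ}
    (hc : ContinuousOn f (Icc a b))
    (h'c : ContinuousOn f' (Icc a b))
    (hd : ∀ x ∈ Icc a b, HasDerivWithinAt f (f' x) (Icc a b) x)
    {u : ℝ} (hu : u ∈ Icc a b) :
    ∫ x in a..u, f' x = f u - f a := by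
  apply integral_eq_sub_of_hasDeriv_right_of_le hu.1
    (hc.mono (Icc_subset_Icc le_rfl hu.2))
    (fun x hx => ?_)
    (contOn_intervalIntegrable hu.1 (h'c.mono (Icc_subset_Icc le_rfl hu.2)))
  have hx' : x ∈ Ioo a b := ⟨hx.1, lt_of_lt_of_le hx.2 hu.2⟩
  exact ((hd x (Ioo_subset_Icc_self hx')).hasDerivAt
    (Icc_mem_nhds hx'.1 hx'.2)).hasDerivWithinAt

/-- Left slice of a jointly continuous function. -/
lemma sliceL {g : ℝ → ℝ → ℝ} {s t : Set ℝ}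
    (hg : ContinuousOn (fun p : ℝ × ℝ => g p.1 p.2) (s ×ˢ t)) {u : ℝ} (hu : u ∈ s) :
    ContinuousOn (fun y => g u y) t := by
  have := hg.comp (f := fun y : ℝ => (u, y))
    (Continuous.continuousOn (by fun_prop)) (fun y hy => ⟨hu, hy⟩)
  exact this

/-- Right slice of a jointly continuous function. -/
lemma sliceR {g : ℝ → ℝ → ℝ} {s t : Set ℝ}
    (hg : ContinuousOn (fun p : ℝ × ℝ => g p.1 p.2) (s ×ˢ t)) {y : ℝ} (hy : y ∈ t) :
    ContinuousOn (fun x => g x y) s := by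
  have := hg.comp (f := fun x : ℝ => (x, y))
    (Continuous.continuousOn (by fun_prop)) (fun x hx => ⟨hx, hy⟩)
  exact this

/-- Continuity of a parametric interval integral. -/
lemma paramCont {a b c d : ℝ} (hcd : c ≤ d) {g : ℝ → ℝ → ℝ}
    (hg : ContinuousOn (fun p : ℝ × ℝ => g p.1 p.2) (Icc a b ×ˢ Icc c d)) :
    ContinuousOn (fun u => ∫ y in c..d, g u y) (Icc a b) := by
  obtain ⟨M, hM⟩ := (isCompact_Icc.prod isCompact_Icc).exists_bound_of_continuousOn hg
  intro s hs
  apply intervalIntegral.continuousWithinAt_of_dominated_interval (bound := fun _ => M)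
  · filter_upwards [self_mem_nhdsWithin] with u hu
    exact ((sliceL hg hu).mono (by rw [uIoc_of_le hcd]; exact Ioc_subset_Icc_self)
      ).aestronglyMeasurable measurableSet_uIoc
  · filter_upwards [self_mem_nhdsWithin] with u hu
    refine Filter.Eventually.of_forall (fun y hy => ?_)
    exact hM (u, y) ⟨hu, Ioc_subset_Icc_self (by rwa [uIoc_of_le hcd] at hy)⟩
  · exact intervalIntegrable_const
  · refine Filter.Eventually.of_forall (fun y hy => ?_)
    exact sliceR hg (Ioc_subset_Icc_self (by rwa [uIoc_of_le hcd] at hy)) s hs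

/-- Differentiation under the interval integral, via FTC + Fubini. -/
lemma paramDeriv {a b c d : ℝ} (hcd : c ≤ d) {f f' : ℝ → ℝ → ℝ}
    (hfc : ContinuousOn (fun p : ℝ × ℝ => f p.1 p.2) (Icc a b ×ˢ Icc c d))
    (hf'c : ContinuousOn (fun p : ℝ × ℝ => f' p.1 p.2) (Icc a b ×ˢ Icc c d))
    (hd : ∀ y ∈ Icc c d, ∀ x ∈ Icc a b, HasDerivWithinAt (fun u => f u y) (f' x y) (Icc a b) x)
    {s : ℝ} (hs : s ∈ Icc a b) :
    HasDerivWithinAt (fun u => ∫ y in c..d, f u y) (∫ y in c..d, f' s y) (Icc a b) s := by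
  have hab : a ≤ b := hs.1.trans hs.2
  have haIcc : a ∈ Icc a b := ⟨le_rfl, hab⟩
  set H : ℝ → ℝ := fun x => ∫ y in c..d, f' x y with hH
  have HC : ContinuousOn H (Icc a b) := paramCont hcd hf'c
  have key : ∀ u ∈ Icc a b,
      (∫ y in c..d, f u y) = (∫ y in c..d, f a y) + ∫ x in a..u, H x := by
    intro u hu
    have h1 : ∀ y ∈ Icc c d, (∫ x in a..u, f' x y) = f u y - f a y := fun y hy =>
      ftc_rep (sliceR hfc hy) (sliceR hf'c hy) (hd y hy) hu
    have hint : IntegrableOn (fun p : ℝ × ℝ => f' p.1 p.2) (Icc a b ×ˢ Icc c d) :=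
      hf'c.integrableOn_compact (isCompact_Icc.prod isCompact_Icc)
    have swap : (∫ x in a..u, H x) = ∫ y in c..d, ∫ x in a..u, f' x y := by
      rw [intervalIntegral.integral_of_le hu.1, intervalIntegral.integral_of_le hcd]
      simp_rw [hH, intervalIntegral.integral_of_le hcd, intervalIntegral.integral_of_le hu.1]
      apply MeasureTheory.integral_integral_swap
      rw [Measure.prod_restrict]
      exact (hint.mono_set (prod_mono (Ioc_subset_Icc_self.trans (Icc_subset_Icc le_rfl hu.2))
        Ioc_subset_Icc_self))
    have hiu : IntervalIntegrable (fun y => f u y) volume c d :=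
      contOn_intervalIntegrable hcd (sliceL hfc hu)
    have hia : IntervalIntegrable (fun y => f a y) volume c d :=
      contOn_intervalIntegrable hcd (sliceL hfc haIcc)
    have : (∫ y in c..d, f u y) - ∫ y in c..d, f a y = ∫ x in a..u, H x := by
      rw [swap, ← intervalIntegral.integral_sub hiu hia]
      refine intervalIntegral.integral_congr (fun y hy => ?_)
      exact (h1 y (by rwa [uIcc_of_le hcd] at hy)).symm
    linarith [this]
  haveI : Fact (s ∈ Icc a b) := ⟨hs⟩
  have hHi : IntervalIntegrable H volume a s :=
    contOn_intervalIntegrable hs.1 (HC.mono (Icc_subset_Icc le_rfl hs.2))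
  have hder : HasDerivWithinAt (fun u => (∫ y in c..d, f a y) + ∫ x in a..u, H x)
      (H s) (Icc a b) s :=
    (intervalIntegral.integral_hasDerivWithinAt_right hHi
      (HC.stronglyMeasurableAtFilter_nhdsWithin measurableSet_Icc s) (HC s hs)).const_add _
  exact hder.congr key (key s hs)

/-- Theorem 2, verification form: if the continuously differentiable
kernel `P(z,y,t)` solves the differential Riccati equation
`∂_t P + v·∂_z P + v·∂_y P + q₁(z,y) - (1/R)·P(z,0,t)·P(0,y,t) = 0` with
`P(z,1,t) = P(1,y,t) = 0` and `P(z,y,T) = P_f(z,y)`, and the continuously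
differentiable state `ρ*` solves `∂_t ρ* + v·∂_z ρ* = 0` with the state-feedback
boundary condition `v·ρ*(0,t) = -(1/R)·∫₀¹ P(0,y,t) ρ*(y,t) dy`, then
`λ(z,t) := ∫₀¹ P(z,y,t) ρ*(y,t) dy` satisfies the co-state equation, the boundary
condition `λ(1,t) = 0`, the terminal condition `λ(z,T) = ∫₀¹ P_f(z,y) ρ*(y,T) dy`, and
the feedback control equals `u*(t) = -(1/R)·λ(0,t)`. -/
theorem riccati_kernel_verification
    (v T R : ℝ) (hv : 0 < v) (hT : 0 < T) (hR : 0 < R)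
    (q₁ Pf : ℝ → ℝ → ℝ)
    (hq₁ : ContinuousOn (fun p : ℝ × ℝ => q₁ p.1 p.2) (Icc 0 1 ×ˢ Icc 0 1))
    (P Pz Py Pt : ℝ → ℝ → ℝ → ℝ)
    (hPc : ContinuousOn (fun p : ℝ × ℝ × ℝ => P p.1 p.2.1 p.2.2)
      (Icc 0 1 ×ˢ Icc 0 1 ×ˢ Icc 0 T))
    (hPzc : ContinuousOn (fun p : ℝ × ℝ × ℝ => Pz p.1 p.2.1 p.2.2)
      (Icc 0 1 ×ˢ Icc 0 1 ×ˢ Icc 0 T))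
    (hPyc : ContinuousOn (fun p : ℝ × ℝ × ℝ => Py p.1 p.2.1 p.2.2)
      (Icc 0 1 ×ˢ Icc 0 1 ×ˢ Icc 0 T))
    (hPtc : ContinuousOn (fun p : ℝ × ℝ × ℝ => Pt p.1 p.2.1 p.2.2)
      (Icc 0 1 ×ˢ Icc 0 1 ×ˢ Icc 0 T))
    (hPz : ∀ y ∈ Icc (0:ℝ) 1, ∀ t ∈ Icc (0:ℝ) T, ∀ z ∈ Icc (0:ℝ) 1,
      HasDerivWithinAt (fun z' => P z' y t) (Pz z y t) (Icc 0 1) z)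
    (hPy : ∀ z ∈ Icc (0:ℝ) 1, ∀ t ∈ Icc (0:ℝ) T, ∀ y ∈ Icc (0:ℝ) 1,
      HasDerivWithinAt (fun y' => P z y' t) (Py z y t) (Icc 0 1) y)
    (hPt : ∀ z ∈ Icc (0:ℝ) 1, ∀ y ∈ Icc (0:ℝ) 1, ∀ t ∈ Icc (0:ℝ) T,
      HasDerivWithinAt (fun t' => P z y t') (Pt z y t) (Icc 0 T) t)
    (hriccati : ∀ z ∈ Icc (0:ℝ) 1, ∀ y ∈ Icc (0:ℝ) 1, ∀ t ∈ Icc (0:ℝ) T,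
      Pt z y t + v * Pz z y t + v * Py z y t + q₁ z y
        - (1 / R) * P z 0 t * P 0 y t = 0)
    (hPbc1 : ∀ z ∈ Icc (0:ℝ) 1, ∀ t ∈ Icc (0:ℝ) T, P z 1 t = 0)
    (hPbc2 : ∀ y ∈ Icc (0:ℝ) 1, ∀ t ∈ Icc (0:ℝ) T, P 1 y t = 0)
    (hPterm : ∀ z ∈ Icc (0:ℝ) 1, ∀ y ∈ Icc (0:ℝ) 1, P z y T = Pf z y)
    (ρ ρz ρt : ℝ → ℝ → ℝ)
    (hρc : ContinuousOn (fun p : ℝ × ℝ => ρ p.1 p.2) (Icc 0 1 ×ˢ Icc 0 T))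
    (hρzc : ContinuousOn (fun p : ℝ × ℝ => ρz p.1 p.2) (Icc 0 1 ×ˢ Icc 0 T))
    (hρtc : ContinuousOn (fun p : ℝ × ℝ => ρt p.1 p.2) (Icc 0 1 ×ˢ Icc 0 T))
    (hρz : ∀ t ∈ Icc (0:ℝ) T, ∀ z ∈ Icc (0:ℝ) 1,
      HasDerivWithinAt (fun z' => ρ z' t) (ρz z t) (Icc 0 1) z)
    (hρt : ∀ z ∈ Icc (0:ℝ) 1, ∀ t ∈ Icc (0:ℝ) T,
      HasDerivWithinAt (fun t' => ρ z t') (ρt z t) (Icc 0 T) t)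
    (htransport : ∀ z ∈ Icc (0:ℝ) 1, ∀ t ∈ Icc (0:ℝ) T, ρt z t + v * ρz z t = 0)
    (hfeedback : ∀ t ∈ Icc (0:ℝ) T,
      v * ρ 0 t = -(1 / R) * ∫ y in (0:ℝ)..1, P 0 y t * ρ y t)
    (l : ℝ → ℝ → ℝ) (hl : ∀ z t, l z t = ∫ y in (0:ℝ)..1, P z y t * ρ y t)
    (u : ℝ → ℝ) (hu : ∀ t, u t = v * ρ 0 t) :
    (∀ z ∈ Icc (0:ℝ) 1, ∀ t ∈ Icc (0:ℝ) T, ∃ lz lt : ℝ,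
      HasDerivWithinAt (fun z' => l z' t) lz (Icc 0 1) z ∧
      HasDerivWithinAt (fun t' => l z t') lt (Icc 0 T) t ∧
      lt + v * lz + (∫ y in (0:ℝ)..1, q₁ z y * ρ y t) = 0) ∧
    (∀ t ∈ Icc (0:ℝ) T, l 1 t = 0) ∧
    (∀ z ∈ Icc (0:ℝ) 1, l z T = ∫ y in (0:ℝ)..1, Pf z y * ρ y T) ∧
    (∀ t ∈ Icc (0:ℝ) T, u t = -(1 / R) * l 0 t) := by
  have h0T : (0:ℝ) ∈ Icc (0:ℝ) T := ⟨le_rfl, hT.le⟩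
  have h01 : (0:ℝ) ∈ Icc (0:ℝ) 1 := ⟨le_rfl, zero_le_one⟩
  have h11 : (1:ℝ) ∈ Icc (0:ℝ) 1 := ⟨zero_le_one, le_rfl⟩
  refine ⟨?_, ?_, ?_, ?_⟩
  · -- co-state equation
    intro z hz t ht
    -- slice continuities in y (fixed z, t)
    have cP : ContinuousOn (fun y => P z y t) (Icc 0 1) := by
      have := hPc.comp (f := fun y : ℝ => (z, y, t))
        (Continuous.continuousOn (by fun_prop)) (fun y hy => ⟨hz, hy, ht⟩)
      exact this
    have cP0 : ContinuousOn (fun y => P 0 y t) (Icc 0 1) := by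
      have := hPc.comp (f := fun y : ℝ => ((0:ℝ), y, t))
        (Continuous.continuousOn (by fun_prop)) (fun y hy => ⟨h01, hy, ht⟩)
      exact this
    have cPz1 : ContinuousOn (fun y => Pz z y t) (Icc 0 1) := by
      have := hPzc.comp (f := fun y : ℝ => (z, y, t))
        (Continuous.continuousOn (by fun_prop)) (fun y hy => ⟨hz, hy, ht⟩)
      exact this
    have cPy1 : ContinuousOn (fun y => Py z y t) (Icc 0 1) := by
      have := hPyc.comp (f := fun y : ℝ => (z, y, t))
        (Continuous.continuousOn (by fun_prop)) (fun y hy => ⟨hz, hy, ht⟩)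
      exact this
    have cPt1 : ContinuousOn (fun y => Pt z y t) (Icc 0 1) := by
      have := hPtc.comp (f := fun y : ℝ => (z, y, t))
        (Continuous.continuousOn (by fun_prop)) (fun y hy => ⟨hz, hy, ht⟩)
      exact this
    have cρ1 : ContinuousOn (fun y => ρ y t) (Icc 0 1) := by
      have := hρc.comp (f := fun y : ℝ => (y, t))
        (Continuous.continuousOn (by fun_prop)) (fun y hy => ⟨hy, ht⟩)
      exact this
    have cρz1 : ContinuousOn (fun y => ρz y t) (Icc 0 1) := by
      have := hρzc.comp (f := fun y : ℝ => (y, t))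
        (Continuous.continuousOn (by fun_prop)) (fun y hy => ⟨hy, ht⟩)
      exact this
    have cρt1 : ContinuousOn (fun y => ρt y t) (Icc 0 1) := by
      have := hρtc.comp (f := fun y : ℝ => (y, t))
        (Continuous.continuousOn (by fun_prop)) (fun y hy => ⟨hy, ht⟩)
      exact this
    -- joint continuities for the z-derivative
    have cPj : ContinuousOn (fun p : ℝ × ℝ => P p.1 p.2 t * ρ p.2 t)
        (Icc 0 1 ×ˢ Icc 0 1) := by
      have h1 := hPc.comp (f := fun p : ℝ × ℝ => (p.1, p.2, t))
        (Continuous.continuousOn (by fun_prop)) (fun p (hp : p ∈ Icc (0:ℝ) 1 ×ˢ Icc (0:ℝ) 1) => ⟨hp.1, hp.2, ht⟩)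
      have h2 := hρc.comp (f := fun p : ℝ × ℝ => (p.2, t))
        (Continuous.continuousOn (by fun_prop)) (fun p (hp : p ∈ Icc (0:ℝ) 1 ×ˢ Icc (0:ℝ) 1) => ⟨hp.2, ht⟩)
      exact h1.mul h2
    have cPzj : ContinuousOn (fun p : ℝ × ℝ => Pz p.1 p.2 t * ρ p.2 t)
        (Icc 0 1 ×ˢ Icc 0 1) := by
      have h1 := hPzc.comp (f := fun p : ℝ × ℝ => (p.1, p.2, t))
        (Continuous.continuousOn (by fun_prop)) (fun p (hp : p ∈ Icc (0:ℝ) 1 ×ˢ Icc (0:ℝ) 1) => ⟨hp.1, hp.2, ht⟩)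
      have h2 := hρc.comp (f := fun p : ℝ × ℝ => (p.2, t))
        (Continuous.continuousOn (by fun_prop)) (fun p (hp : p ∈ Icc (0:ℝ) 1 ×ˢ Icc (0:ℝ) 1) => ⟨hp.2, ht⟩)
      exact h1.mul h2
    -- joint continuities for the t-derivative (parameter = time)
    have cPj' : ContinuousOn (fun p : ℝ × ℝ => P z p.2 p.1 * ρ p.2 p.1)
        (Icc 0 T ×ˢ Icc 0 1) := by
      have h1 := hPc.comp (f := fun p : ℝ × ℝ => (z, p.2, p.1))
        (Continuous.continuousOn (by fun_prop)) (fun p (hp : p ∈ Icc (0:ℝ) T ×ˢ Icc (0:ℝ) 1) => ⟨hz, hp.2, hp.1⟩)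
      have h2 := hρc.comp (f := fun p : ℝ × ℝ => (p.2, p.1))
        (Continuous.continuousOn (by fun_prop)) (fun p (hp : p ∈ Icc (0:ℝ) T ×ˢ Icc (0:ℝ) 1) => ⟨hp.2, hp.1⟩)
      exact h1.mul h2
    have cPj't : ContinuousOn
        (fun p : ℝ × ℝ => Pt z p.2 p.1 * ρ p.2 p.1 + P z p.2 p.1 * ρt p.2 p.1)
        (Icc 0 T ×ˢ Icc 0 1) := by
      have h1 := hPtc.comp (f := fun p : ℝ × ℝ => (z, p.2, p.1))
        (Continuous.continuousOn (by fun_prop)) (fun p (hp : p ∈ Icc (0:ℝ) T ×ˢ Icc (0:ℝ) 1) => ⟨hz, hp.2, hp.1⟩)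
      have h2 := hρc.comp (f := fun p : ℝ × ℝ => (p.2, p.1))
        (Continuous.continuousOn (by fun_prop)) (fun p (hp : p ∈ Icc (0:ℝ) T ×ˢ Icc (0:ℝ) 1) => ⟨hp.2, hp.1⟩)
      have h3 := hPc.comp (f := fun p : ℝ × ℝ => (z, p.2, p.1))
        (Continuous.continuousOn (by fun_prop)) (fun p (hp : p ∈ Icc (0:ℝ) T ×ˢ Icc (0:ℝ) 1) => ⟨hz, hp.2, hp.1⟩)
      have h4 := hρtc.comp (f := fun p : ℝ × ℝ => (p.2, p.1))
        (Continuous.continuousOn (by fun_prop)) (fun p (hp : p ∈ Icc (0:ℝ) T ×ˢ Icc (0:ℝ) 1) => ⟨hp.2, hp.1⟩)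
      exact (h1.mul h2).add (h3.mul h4)
    -- derivative in z
    have derivA : HasDerivWithinAt (fun z' => l z' t)
        (∫ y in (0:ℝ)..1, Pz z y t * ρ y t) (Icc 0 1) z := by
      have := paramDeriv (a := 0) (b := 1) zero_le_one cPj cPzj
        (fun y hy x hx => (hPz y hy t ht x hx).mul_const (ρ y t)) hz
      simpa only [hl] using this
    -- derivative in t
    have derivB : HasDerivWithinAt (fun t' => l z t')
        (∫ y in (0:ℝ)..1, (Pt z y t * ρ y t + P z y t * ρt y t)) (Icc 0 T) t := by
      have := paramDeriv (a := 0) (b := T) zero_le_one cPj' cPj't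
        (fun y hy x hx => (hPt z hz y hy x hx).mul (hρt y hy x hx)) ht
      simpa only [hl, Pi.mul_apply] using this
    refine ⟨∫ y in (0:ℝ)..1, Pz z y t * ρ y t,
      ∫ y in (0:ℝ)..1, (Pt z y t * ρ y t + P z y t * ρt y t), derivA, derivB, ?_⟩
    -- the algebra
    have iPt : IntervalIntegrable (fun y => Pt z y t * ρ y t + P z y t * ρt y t)
        volume 0 1 :=
      contOn_intervalIntegrable zero_le_one ((cPt1.mul cρ1).add (cP.mul cρt1))
    have iPz' : IntervalIntegrable (fun y => v * (Pz z y t * ρ y t)) volume 0 1 :=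
      contOn_intervalIntegrable zero_le_one (continuousOn_const.mul (cPz1.mul cρ1))
    have iq : IntervalIntegrable (fun y => q₁ z y * ρ y t) volume 0 1 :=
      contOn_intervalIntegrable zero_le_one ((sliceL hq₁ hz).mul cρ1)
    have i4 : IntervalIntegrable (fun y => Py z y t * ρ y t + P z y t * ρz y t)
        volume 0 1 :=
      contOn_intervalIntegrable zero_le_one ((cPy1.mul cρ1).add (cP.mul cρz1))
    have i5 : IntervalIntegrable (fun y => (1 / R * P z 0 t) * (P 0 y t * ρ y t))
        volume 0 1 :=
      contOn_intervalIntegrable zero_le_one (continuousOn_const.mul (cP0.mul cρ1))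
    have hXint : (∫ y in (0:ℝ)..1, (Py z y t * ρ y t + P z y t * ρz y t))
        = P z 1 t * ρ 1 t - P z 0 t * ρ 0 t :=
      ftc_rep (cP.mul cρ1) ((cPy1.mul cρ1).add (cP.mul cρz1))
        (fun y hy => (hPy z hz t ht y hy).mul (hρz t ht y hy)) h11
    have hfb := hfeedback t ht
    have hR' : R ≠ 0 := ne_of_gt hR
    calc (∫ y in (0:ℝ)..1, (Pt z y t * ρ y t + P z y t * ρt y t))
          + v * (∫ y in (0:ℝ)..1, Pz z y t * ρ y t)
          + (∫ y in (0:ℝ)..1, q₁ z y * ρ y t)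
        = ∫ y in (0:ℝ)..1, ((Pt z y t * ρ y t + P z y t * ρt y t)
            + v * (Pz z y t * ρ y t) + q₁ z y * ρ y t) := by
          rw [← intervalIntegral.integral_const_mul,
            ← intervalIntegral.integral_add iPt iPz',
            ← intervalIntegral.integral_add (iPt.add iPz') iq]
      _ = ∫ y in (0:ℝ)..1, ((-v) * (Py z y t * ρ y t + P z y t * ρz y t)
            + (1 / R * P z 0 t) * (P 0 y t * ρ y t)) := by
          refine intervalIntegral.integral_congr (fun y hy => ?_)
          have hy' : y ∈ Icc (0:ℝ) 1 := by rwa [uIcc_of_le zero_le_one] at hy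
          have e1 := hriccati z hz y hy' t ht
          have e2 := htransport y hy' t ht
          linear_combination ρ y t * e1 + P z y t * e2
      _ = (-v) * (∫ y in (0:ℝ)..1, (Py z y t * ρ y t + P z y t * ρz y t))
            + (1 / R * P z 0 t) * (∫ y in (0:ℝ)..1, P 0 y t * ρ y t) := by
          rw [intervalIntegral.integral_add
              (show IntervalIntegrable (fun y => (-v) * (Py z y t * ρ y t + P z y t * ρz y t))
                volume 0 1 from (contOn_intervalIntegrable zero_le_one
                (continuousOn_const.mul ((cPy1.mul cρ1).add (cP.mul cρz1))))) i5,
            intervalIntegral.integral_const_mul, intervalIntegral.integral_const_mul]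
      _ = 0 := by
          have hI : (∫ y in (0:ℝ)..1, P 0 y t * ρ y t) = -R * (v * ρ 0 t) := by
            field_simp at hfb
            linarith
          rw [hXint, hPbc1 z hz t ht, hI]
          field_simp
          ring
  · -- boundary condition
    intro t ht
    rw [hl, show (∫ y in (0:ℝ)..1, P 1 y t * ρ y t) = ∫ _ in (0:ℝ)..1, (0:ℝ) from
      intervalIntegral.integral_congr (fun y hy => by
        rw [hPbc2 y (by rwa [uIcc_of_le zero_le_one] at hy) t ht, zero_mul]),
      intervalIntegral.integral_zero]
  · -- terminal condition
    intro z hz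
    rw [hl]
    exact intervalIntegral.integral_congr (fun y hy => by
      rw [hPterm z hz y (by rwa [uIcc_of_le zero_le_one] at hy)])
  · -- feedback control
    intro t ht
    rw [hu, hl, hfeedback t ht]
end

section
/- (Completion-of-squares identity underlying Theorem 2.) Let v > 0, T > 0, R > 0, let q₁, P_f : [0,1]² → ℝ be continuous, and let P : [0,1] × [0,1] × [0,T] → ℝ be continuously differentiable, symmetric in the sense P(z,y,t) = P(y,z,t), and solve the differential Riccati equation ∂_t P + v·∂_z P + v·∂_y P + q₁(z,y) − (1/R)·P(z,0,t)·P(0,y,t) = 0 with P(z,1,t) = P(1,y,t) = 0 and P(z,y,T) = P_f(z,y). Let ρ : [0,1] × [0,T] → ℝ be any continuously differentiable solution of ∂_t ρ + v·∂_z ρ = 0 with influx u(t) := v·ρ(0,t) continuous and initial data ρ₀ := ρ(·,0). Then J(ρ,u) = (1/2)·∫₀¹∫₀¹ P(z,y,0) ρ₀(y) ρ₀(z) dy dz + (R/2)·∫₀ᵀ ( u(t) + (1/R)·∫₀¹ P(0,y,t) ρ(y,t) dy )² dt. -/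
open Set MeasureTheory intervalIntegral

section helpers
lemma my_ext {X : Type*} [TopologicalSpace X] [NormalSpace X] {s : Set X}
    (hs : IsClosed s) {f : X → ℝ} (hf : ContinuousOn f s) :
    ∃ g : X → ℝ, Continuous g ∧ ∀ x ∈ s, g x = f x := by
  obtain ⟨g, hg⟩ := ContinuousMap.exists_restrict_eq (Y := ℝ) hs ⟨s.restrict f, hf.restrict⟩
  refine ⟨g, g.continuous, fun x hx => ?_⟩
  have := congrFun (congrArg ContinuousMap.toFun hg) ⟨x, hx⟩
  exact this

lemma my_ftc {f f' : ℝ → ℝ} {a b : ℝ} (hab : a ≤ b)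
    (hd : ∀ x ∈ Icc a b, HasDerivWithinAt f (f' x) (Icc a b) x)
    (hint : IntervalIntegrable f' volume a b) :
    ∫ x in a..b, f' x = f b - f a := by
  refine integral_eq_sub_of_hasDeriv_right_of_le hab
    (fun x hx => (hd x hx).continuousWithinAt) (fun x hx => ?_) hint
  exact ((hd x (Ioo_subset_Icc_self hx)).hasDerivAt (Icc_mem_nhds hx.1 hx.2)).hasDerivWithinAt

lemma my_congr {a b : ℝ} (hab : a ≤ b) {f g : ℝ → ℝ}
    (h : ∀ x ∈ Icc a b, f x = g x) :
    ∫ x in a..b, f x = ∫ x in a..b, g x :=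
  intervalIntegral.integral_congr (by rwa [uIcc_of_le hab])

lemma my_swap {f : ℝ → ℝ → ℝ} (hf : Continuous fun p : ℝ × ℝ => f p.1 p.2)
    {a b c d : ℝ} (hab : a ≤ b) (hcd : c ≤ d) :
    (∫ x in a..b, ∫ y in c..d, f x y) = ∫ y in c..d, ∫ x in a..b, f x y := by
  rw [intervalIntegral.integral_of_le hab, intervalIntegral.integral_of_le hcd]
  simp_rw [intervalIntegral.integral_of_le hab, intervalIntegral.integral_of_le hcd]
  have hint : Integrable (Function.uncurry f)
      ((volume.restrict (Ioc a b)).prod (volume.restrict (Ioc c d))) := by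
    rw [Measure.prod_restrict, ← Measure.volume_eq_prod]
    exact (hf.continuousOn.integrableOn_compact (isCompact_Icc.prod isCompact_Icc)).mono_set
      (prod_mono Ioc_subset_Icc_self Ioc_subset_Icc_self)
  exact MeasureTheory.integral_integral_swap hint

lemma my_param {X : Type*} [TopologicalSpace X] {f : X → ℝ → ℝ}
    (hf : Continuous fun p : X × ℝ => f p.1 p.2) (a b : ℝ) :
    Continuous fun x => ∫ t in a..b, f x t :=
  intervalIntegral.continuous_parametric_intervalIntegral_of_continuous' hf a b
end helpers

noncomputable def He (v R : ℝ) (p pz py : ℝ → ℝ → ℝ → ℝ) (q r rz : ℝ → ℝ → ℝ) (z y t : ℝ) : ℝ :=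
  -(v * (pz z y t * r y t * r z t + p z y t * r y t * rz z t))
    - v * (py z y t * r y t * r z t + p z y t * rz y t * r z t)
    - q z y * r y t * r z t
    + (1/R) * p z 0 t * p 0 y t * (r y t * r z t)

lemma key_identity (v T R : ℝ) (hT : 0 < T)
    (p pz py : ℝ → ℝ → ℝ → ℝ) (q r rz : ℝ → ℝ → ℝ)
    (hpc : Continuous fun x : ℝ × ℝ × ℝ => p x.1 x.2.1 x.2.2)
    (hpzc : Continuous fun x : ℝ × ℝ × ℝ => pz x.1 x.2.1 x.2.2)
    (hpyc : Continuous fun x : ℝ × ℝ × ℝ => py x.1 x.2.1 x.2.2)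
    (hqc : Continuous fun x : ℝ × ℝ => q x.1 x.2)
    (hrc : Continuous fun x : ℝ × ℝ => r x.1 x.2)
    (hrzc : Continuous fun x : ℝ × ℝ => rz x.1 x.2)
    (hsymm : ∀ z ∈ Icc (0:ℝ) 1, ∀ t ∈ Icc (0:ℝ) T, p z 0 t = p 0 z t)
    (hFt : ∀ z ∈ Icc (0:ℝ) 1, ∀ y ∈ Icc (0:ℝ) 1, ∀ t ∈ Icc (0:ℝ) T,
      HasDerivWithinAt (fun t' => p z y t' * r y t' * r z t')
        (He v R p pz py q r rz z y t) (Icc 0 T) t)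
    (hFz : ∀ y ∈ Icc (0:ℝ) 1, ∀ t ∈ Icc (0:ℝ) T, ∀ z ∈ Icc (0:ℝ) 1,
      HasDerivWithinAt (fun z' => p z' y t * r y t * r z' t)
        (pz z y t * r y t * r z t + p z y t * r y t * rz z t) (Icc 0 1) z)
    (hFy : ∀ z ∈ Icc (0:ℝ) 1, ∀ t ∈ Icc (0:ℝ) T, ∀ y ∈ Icc (0:ℝ) 1,
      HasDerivWithinAt (fun y' => p z y' t * r y' t * r z t)
        (py z y t * r y t * r z t + p z y t * rz y t * r z t) (Icc 0 1) y)
    (hbc1 : ∀ z ∈ Icc (0:ℝ) 1, ∀ t ∈ Icc (0:ℝ) T, p z 1 t = 0)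
    (hbc2 : ∀ y ∈ Icc (0:ℝ) 1, ∀ t ∈ Icc (0:ℝ) T, p 1 y t = 0) :
    (∫ z in (0:ℝ)..1, ∫ y in (0:ℝ)..1, p z y T * r y T * r z T)
      - (∫ z in (0:ℝ)..1, ∫ y in (0:ℝ)..1, p z y 0 * r y 0 * r z 0)
    = ∫ t in (0:ℝ)..T,
        (2 * v * r 0 t * (∫ y in (0:ℝ)..1, p 0 y t * r y t)
          - (∫ z in (0:ℝ)..1, ∫ y in (0:ℝ)..1, q z y * r y t * r z t)
          + (1/R) * (∫ y in (0:ℝ)..1, p 0 y t * r y t)^2) := by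
  have h01 : (0:ℝ) ≤ 1 := zero_le_one
  have hT' : (0:ℝ) ≤ T := hT.le
  set H := He v R p pz py q r rz with hH
  have hHc : Continuous fun x : ℝ × ℝ × ℝ => H x.1 x.2.1 x.2.2 := by
    rw [hH]; unfold He; fun_prop
  have hHct : ∀ z y, Continuous fun t => H z y t := fun z y =>
    hHc.comp (by fun_prop : Continuous fun t : ℝ => ((z, y, t) : ℝ × ℝ × ℝ))
  have hHc2 : ∀ z, Continuous fun x : ℝ × ℝ => H z x.1 x.2 := fun z =>
    hHc.comp (by fun_prop : Continuous fun x : ℝ × ℝ => ((z, x.1, x.2) : ℝ × ℝ × ℝ))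
  have hHcy : ∀ z t, Continuous fun y => H z y t := fun z t =>
    hHc.comp (by fun_prop : Continuous fun y : ℝ => ((z, y, t) : ℝ × ℝ × ℝ))
  have hHparam : Continuous fun x : ℝ × ℝ => ∫ y in (0:ℝ)..1, H x.1 y x.2 :=
    my_param (f := fun (x : ℝ × ℝ) (y : ℝ) => H x.1 y x.2)
      (hHc.comp (by fun_prop : Continuous fun pp : (ℝ × ℝ) × ℝ =>
        ((pp.1.1, pp.2, pp.1.2) : ℝ × ℝ × ℝ))) 0 1
  -- Step 1 : FTC in time
  have step1 : ∀ z ∈ Icc (0:ℝ) 1, ∀ y ∈ Icc (0:ℝ) 1,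
      (∫ t in (0:ℝ)..T, H z y t)
        = p z y T * r y T * r z T - p z y 0 * r y 0 * r z 0 := fun z hz y hy =>
    my_ftc hT' (fun t ht => hFt z hz y hy t ht) ((hHct z y).intervalIntegrable 0 T)
  -- Step 2 : swap to put t outermost
  have step2 : (∫ z in (0:ℝ)..1, ∫ y in (0:ℝ)..1, ∫ t in (0:ℝ)..T, H z y t)
      = ∫ t in (0:ℝ)..T, ∫ z in (0:ℝ)..1, ∫ y in (0:ℝ)..1, H z y t := by
    have e1 : ∀ z : ℝ, (∫ y in (0:ℝ)..1, ∫ t in (0:ℝ)..T, H z y t)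
        = ∫ t in (0:ℝ)..T, ∫ y in (0:ℝ)..1, H z y t := fun z =>
      my_swap (hHc2 z) h01 hT'
    calc (∫ z in (0:ℝ)..1, ∫ y in (0:ℝ)..1, ∫ t in (0:ℝ)..T, H z y t)
        = ∫ z in (0:ℝ)..1, ∫ t in (0:ℝ)..T, ∫ y in (0:ℝ)..1, H z y t := by
          simp only [e1]
      _ = ∫ t in (0:ℝ)..T, ∫ z in (0:ℝ)..1, ∫ y in (0:ℝ)..1, H z y t :=
          my_swap (f := fun z t => ∫ y in (0:ℝ)..1, H z y t) hHparam h01 hT'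
  -- Step 3 : evaluate the space integral at fixed time
  have step3 : ∀ t ∈ Icc (0:ℝ) T, (∫ z in (0:ℝ)..1, ∫ y in (0:ℝ)..1, H z y t)
      = 2 * v * r 0 t * (∫ y in (0:ℝ)..1, p 0 y t * r y t)
        - (∫ z in (0:ℝ)..1, ∫ y in (0:ℝ)..1, q z y * r y t * r z t)
        + (1/R) * (∫ y in (0:ℝ)..1, p 0 y t * r y t)^2 := by
    intro t ht
    set wt : ℝ := ∫ y in (0:ℝ)..1, p 0 y t * r y t with hwt
    -- inner integral in y, for fixed z
    have inner : ∀ z ∈ Icc (0:ℝ) 1, (∫ y in (0:ℝ)..1, H z y t)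
        = (-v) * (∫ y in (0:ℝ)..1,
              (pz z y t * r y t * r z t + p z y t * r y t * rz z t))
          + (v * (p z 0 t * r 0 t * r z t)
          + ((-1) * (∫ y in (0:ℝ)..1, q z y * r y t * r z t)
          + ((1/R) * p z 0 t * r z t) * wt)) := by
      intro z hz
      have i1 : IntervalIntegrable
          (fun y => pz z y t * r y t * r z t + p z y t * r y t * rz z t) volume 0 1 :=
        (by fun_prop : Continuous _).intervalIntegrable 0 1
      have i2 : IntervalIntegrable
          (fun y => py z y t * r y t * r z t + p z y t * rz y t * r z t) volume 0 1 :=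
        (by fun_prop : Continuous _).intervalIntegrable 0 1
      have i3 : IntervalIntegrable (fun y => q z y * r y t * r z t) volume 0 1 :=
        (by fun_prop : Continuous _).intervalIntegrable 0 1
      have i4 : IntervalIntegrable (fun y => p 0 y t * r y t) volume 0 1 :=
        (by fun_prop : Continuous _).intervalIntegrable 0 1
      have iB : (∫ y in (0:ℝ)..1,
            (py z y t * r y t * r z t + p z y t * rz y t * r z t))
          = - (p z 0 t * r 0 t * r z t) := by
        rw [my_ftc h01 (fun y hy => hFy z hz t ht y hy) i2, hbc1 z hz t ht]; ring
      have expand : (fun y => H z y t) = fun y =>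
          (-v) * (pz z y t * r y t * r z t + p z y t * r y t * rz z t)
          + ((-v) * (py z y t * r y t * r z t + p z y t * rz y t * r z t)
          + ((-1) * (q z y * r y t * r z t)
          + ((1/R) * p z 0 t * r z t) * (p 0 y t * r y t))) := by
        funext y; rw [hH]; unfold He; ring
      rw [expand, intervalIntegral.integral_add (i1.const_mul _)
            ((i2.const_mul _).add ((i3.const_mul _).add (i4.const_mul _))),
          intervalIntegral.integral_add (i2.const_mul _)
            ((i3.const_mul _).add (i4.const_mul _)),
          intervalIntegral.integral_add (i3.const_mul _) (i4.const_mul _),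
          intervalIntegral.integral_const_mul, intervalIntegral.integral_const_mul,
          intervalIntegral.integral_const_mul, intervalIntegral.integral_const_mul, iB,
          ← hwt]
      ring
    -- integrate in z
    have cz1 : Continuous fun z => ∫ y in (0:ℝ)..1,
        (pz z y t * r y t * r z t + p z y t * r y t * rz z t) :=
      my_param (f := fun (z : ℝ) (y : ℝ) =>
        pz z y t * r y t * r z t + p z y t * r y t * rz z t) (by fun_prop) 0 1
    have cz3 : Continuous fun z => ∫ y in (0:ℝ)..1, q z y * r y t * r z t :=
      my_param (f := fun (z : ℝ) (y : ℝ) => q z y * r y t * r z t) (by fun_prop) 0 1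
    have J1 : (∫ z in (0:ℝ)..1, ∫ y in (0:ℝ)..1,
          (pz z y t * r y t * r z t + p z y t * r y t * rz z t))
        = wt * (-(r 0 t)) := by
      rw [my_swap (f := fun z y =>
          pz z y t * r y t * r z t + p z y t * r y t * rz z t) (by fun_prop) h01 h01]
      have e : ∀ y ∈ Icc (0:ℝ) 1, (∫ z in (0:ℝ)..1,
            (pz z y t * r y t * r z t + p z y t * r y t * rz z t))
          = (p 0 y t * r y t) * (-(r 0 t)) := by
        intro y hy
        rw [my_ftc h01 (fun z hz => hFz y hy t ht z hz)
            ((by fun_prop : Continuous _).intervalIntegrable 0 1), hbc2 y hy t ht]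
        ring
      rw [my_congr h01 e, intervalIntegral.integral_mul_const]
    have J2 : (∫ z in (0:ℝ)..1, v * (p z 0 t * r 0 t * r z t))
        = (v * r 0 t) * wt := by
      have e : ∀ z ∈ Icc (0:ℝ) 1, v * (p z 0 t * r 0 t * r z t)
          = (v * r 0 t) * (p 0 z t * r z t) := by
        intro z hz; rw [hsymm z hz t ht]; ring
      rw [my_congr h01 e, intervalIntegral.integral_const_mul]
    have J4 : (∫ z in (0:ℝ)..1, ((1/R) * p z 0 t * r z t) * wt)
        = ((1/R) * wt) * wt := by
      have e : ∀ z ∈ Icc (0:ℝ) 1, ((1/R) * p z 0 t * r z t) * wt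
          = ((1/R) * wt) * (p 0 z t * r z t) := by
        intro z hz; rw [hsymm z hz t ht]; ring
      rw [my_congr h01 e, intervalIntegral.integral_const_mul]
    have iz1 : IntervalIntegrable (fun z => (-v) * (∫ y in (0:ℝ)..1,
        (pz z y t * r y t * r z t + p z y t * r y t * rz z t))) volume 0 1 :=
      ((continuous_const.mul cz1).intervalIntegrable 0 1)
    have iz2 : IntervalIntegrable (fun z => v * (p z 0 t * r 0 t * r z t)) volume 0 1 :=
      (by fun_prop : Continuous _).intervalIntegrable 0 1
    have iz3 : IntervalIntegrable (fun z =>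
        (-1) * (∫ y in (0:ℝ)..1, q z y * r y t * r z t)) volume 0 1 :=
      ((continuous_const.mul cz3).intervalIntegrable 0 1)
    have iz4 : IntervalIntegrable (fun z =>
        ((1/R) * p z 0 t * r z t) * wt) volume 0 1 :=
      (by fun_prop : Continuous _).intervalIntegrable 0 1
    calc (∫ z in (0:ℝ)..1, ∫ y in (0:ℝ)..1, H z y t)
        = ∫ z in (0:ℝ)..1, ((-v) * (∫ y in (0:ℝ)..1,
              (pz z y t * r y t * r z t + p z y t * r y t * rz z t))
            + (v * (p z 0 t * r 0 t * r z t)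
            + ((-1) * (∫ y in (0:ℝ)..1, q z y * r y t * r z t)
            + ((1/R) * p z 0 t * r z t) * wt))) := my_congr h01 inner
      _ = (-v) * (∫ z in (0:ℝ)..1, ∫ y in (0:ℝ)..1,
              (pz z y t * r y t * r z t + p z y t * r y t * rz z t))
            + ((∫ z in (0:ℝ)..1, v * (p z 0 t * r 0 t * r z t))
            + ((-1) * (∫ z in (0:ℝ)..1, ∫ y in (0:ℝ)..1, q z y * r y t * r z t)
            + (∫ z in (0:ℝ)..1, ((1/R) * p z 0 t * r z t) * wt))) := by
          rw [intervalIntegral.integral_add iz1 (iz2.add (iz3.add iz4)),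
              intervalIntegral.integral_add iz2 (iz3.add iz4),
              intervalIntegral.integral_add iz3 iz4]
          simp only [intervalIntegral.integral_const_mul]
      _ = 2 * v * r 0 t * wt
            - (∫ z in (0:ℝ)..1, ∫ y in (0:ℝ)..1, q z y * r y t * r z t)
            + (1/R) * wt^2 := by
          rw [J1, J2, J4]; ring
  -- Step 4 : identify the triple integral with the boundary difference
  have step4 : (∫ z in (0:ℝ)..1, ∫ y in (0:ℝ)..1, p z y T * r y T * r z T)
      - (∫ z in (0:ℝ)..1, ∫ y in (0:ℝ)..1, p z y 0 * r y 0 * r z 0)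
      = ∫ z in (0:ℝ)..1, ∫ y in (0:ℝ)..1, ∫ t in (0:ℝ)..T, H z y t := by
    have e : ∀ z ∈ Icc (0:ℝ) 1, (∫ y in (0:ℝ)..1, ∫ t in (0:ℝ)..T, H z y t)
        = (∫ y in (0:ℝ)..1, p z y T * r y T * r z T)
          - (∫ y in (0:ℝ)..1, p z y 0 * r y 0 * r z 0) := by
      intro z hz
      rw [my_congr h01 (fun y hy => step1 z hz y hy),
        intervalIntegral.integral_sub
          ((by fun_prop : Continuous fun y => p z y T * r y T * r z T).intervalIntegrable 0 1)
          ((by fun_prop : Continuous fun y => p z y 0 * r y 0 * r z 0).intervalIntegrable 0 1)]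
    rw [my_congr h01 e, intervalIntegral.integral_sub
        ((my_param (f := fun (z : ℝ) (y : ℝ) => p z y T * r y T * r z T)
          (by fun_prop) 0 1).intervalIntegrable 0 1)
        ((my_param (f := fun (z : ℝ) (y : ℝ) => p z y 0 * r y 0 * r z 0)
          (by fun_prop) 0 1).intervalIntegrable 0 1)]
  rw [step4, step2]
  exact my_congr hT' step3



/-- completion-of-squares identity underlying Theorem 2: if the
symmetric, continuously differentiable kernel `P(z,y,t)` solves the differential
Riccati equation `∂_t P + v·∂_z P + v·∂_y P + q₁(z,y) - (1/R)·P(z,0,t)·P(0,y,t) = 0`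
with `P(z,1,t) = P(1,y,t) = 0` and `P(·,·,T) = P_f`, then for every continuously
differentiable solution `ρ` of `∂_t ρ + v·∂_z ρ = 0` with influx `u(t) = v·ρ(0,t)` and
initial data `ρ₀ = ρ(·,0)`, the cost satisfies
`J(ρ,u) = (1/2)∫₀¹∫₀¹ P(z,y,0) ρ₀(y) ρ₀(z) dy dz
  + (R/2)∫₀ᵀ (u(t) + (1/R)∫₀¹ P(0,y,t) ρ(y,t) dy)² dt`. -/
theorem completion_of_squares_identity
    (v T R : ℝ) (hv : 0 < v) (hT : 0 < T) (hR : 0 < R)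
    (q₁ Pf : ℝ → ℝ → ℝ)
    (hq₁ : ContinuousOn (fun p : ℝ × ℝ => q₁ p.1 p.2) (Icc 0 1 ×ˢ Icc 0 1))
    (hPfc : ContinuousOn (fun p : ℝ × ℝ => Pf p.1 p.2) (Icc 0 1 ×ˢ Icc 0 1))
    (P Pz Py Pt : ℝ → ℝ → ℝ → ℝ)
    (hPc : ContinuousOn (fun p : ℝ × ℝ × ℝ => P p.1 p.2.1 p.2.2)
      (Icc 0 1 ×ˢ Icc 0 1 ×ˢ Icc 0 T))
    (hPzc : ContinuousOn (fun p : ℝ × ℝ × ℝ => Pz p.1 p.2.1 p.2.2)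
      (Icc 0 1 ×ˢ Icc 0 1 ×ˢ Icc 0 T))
    (hPyc : ContinuousOn (fun p : ℝ × ℝ × ℝ => Py p.1 p.2.1 p.2.2)
      (Icc 0 1 ×ˢ Icc 0 1 ×ˢ Icc 0 T))
    (hPtc : ContinuousOn (fun p : ℝ × ℝ × ℝ => Pt p.1 p.2.1 p.2.2)
      (Icc 0 1 ×ˢ Icc 0 1 ×ˢ Icc 0 T))
    (hPsymm : ∀ z ∈ Icc (0:ℝ) 1, ∀ y ∈ Icc (0:ℝ) 1, ∀ t ∈ Icc (0:ℝ) T,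
      P z y t = P y z t)
    (hPz : ∀ y ∈ Icc (0:ℝ) 1, ∀ t ∈ Icc (0:ℝ) T, ∀ z ∈ Icc (0:ℝ) 1,
      HasDerivWithinAt (fun z' => P z' y t) (Pz z y t) (Icc 0 1) z)
    (hPy : ∀ z ∈ Icc (0:ℝ) 1, ∀ t ∈ Icc (0:ℝ) T, ∀ y ∈ Icc (0:ℝ) 1,
      HasDerivWithinAt (fun y' => P z y' t) (Py z y t) (Icc 0 1) y)
    (hPt : ∀ z ∈ Icc (0:ℝ) 1, ∀ y ∈ Icc (0:ℝ) 1, ∀ t ∈ Icc (0:ℝ) T,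
      HasDerivWithinAt (fun t' => P z y t') (Pt z y t) (Icc 0 T) t)
    (hriccati : ∀ z ∈ Icc (0:ℝ) 1, ∀ y ∈ Icc (0:ℝ) 1, ∀ t ∈ Icc (0:ℝ) T,
      Pt z y t + v * Pz z y t + v * Py z y t + q₁ z y
        - (1 / R) * P z 0 t * P 0 y t = 0)
    (hPbc1 : ∀ z ∈ Icc (0:ℝ) 1, ∀ t ∈ Icc (0:ℝ) T, P z 1 t = 0)
    (hPbc2 : ∀ y ∈ Icc (0:ℝ) 1, ∀ t ∈ Icc (0:ℝ) T, P 1 y t = 0)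
    (hPterm : ∀ z ∈ Icc (0:ℝ) 1, ∀ y ∈ Icc (0:ℝ) 1, P z y T = Pf z y)
    (ρ ρz ρt : ℝ → ℝ → ℝ)
    (hρc : ContinuousOn (fun p : ℝ × ℝ => ρ p.1 p.2) (Icc 0 1 ×ˢ Icc 0 T))
    (hρzc : ContinuousOn (fun p : ℝ × ℝ => ρz p.1 p.2) (Icc 0 1 ×ˢ Icc 0 T))
    (hρtc : ContinuousOn (fun p : ℝ × ℝ => ρt p.1 p.2) (Icc 0 1 ×ˢ Icc 0 T))
    (hρz : ∀ t ∈ Icc (0:ℝ) T, ∀ z ∈ Icc (0:ℝ) 1,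
      HasDerivWithinAt (fun z' => ρ z' t) (ρz z t) (Icc 0 1) z)
    (hρt : ∀ z ∈ Icc (0:ℝ) 1, ∀ t ∈ Icc (0:ℝ) T,
      HasDerivWithinAt (fun t' => ρ z t') (ρt z t) (Icc 0 T) t)
    (htransport : ∀ z ∈ Icc (0:ℝ) 1, ∀ t ∈ Icc (0:ℝ) T, ρt z t + v * ρz z t = 0)
    (u : ℝ → ℝ) (hu : ∀ t, u t = v * ρ 0 t) (huc : ContinuousOn u (Icc 0 T))
    (ρ₀ : ℝ → ℝ) (hinit : ∀ z, ρ₀ z = ρ z 0)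
    (J : ℝ)
    (hJ : J = (1 / 2) * (∫ t in (0:ℝ)..T,
        ((∫ z in (0:ℝ)..1, ∫ y in (0:ℝ)..1, q₁ z y * ρ y t * ρ z t) + R * u t ^ 2)) +
      (1 / 2) * ∫ z in (0:ℝ)..1, ∫ y in (0:ℝ)..1, Pf z y * ρ y T * ρ z T) :
    J = (1 / 2) * (∫ z in (0:ℝ)..1, ∫ y in (0:ℝ)..1, P z y 0 * ρ₀ y * ρ₀ z) +
      (R / 2) * ∫ t in (0:ℝ)..T,
        (u t + (1 / R) * ∫ y in (0:ℝ)..1, P 0 y t * ρ y t) ^ 2 := by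
  have h01 : (0:ℝ) ≤ 1 := zero_le_one
  have hT' : (0:ℝ) ≤ T := hT.le
  have h0m : (0:ℝ) ∈ Icc (0:ℝ) 1 := ⟨le_refl 0, zero_le_one⟩
  have h1m : (1:ℝ) ∈ Icc (0:ℝ) 1 := ⟨zero_le_one, le_refl 1⟩
  have hTm : T ∈ Icc (0:ℝ) T := ⟨hT.le, le_refl T⟩
  have h0Tm : (0:ℝ) ∈ Icc (0:ℝ) T := ⟨le_refl 0, hT.le⟩
  -- continuous extensions
  have hcl3 : IsClosed (Icc (0:ℝ) 1 ×ˢ Icc (0:ℝ) 1 ×ˢ Icc (0:ℝ) T) :=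
    isClosed_Icc.prod (isClosed_Icc.prod isClosed_Icc)
  have hcl2 : IsClosed (Icc (0:ℝ) 1 ×ˢ Icc (0:ℝ) T) := isClosed_Icc.prod isClosed_Icc
  have hcl2' : IsClosed (Icc (0:ℝ) 1 ×ˢ Icc (0:ℝ) 1) := isClosed_Icc.prod isClosed_Icc
  obtain ⟨pe, hpec, hpee⟩ := my_ext hcl3 hPc
  obtain ⟨pze, hpzec, hpzee⟩ := my_ext hcl3 hPzc
  obtain ⟨pye, hpyec, hpyee⟩ := my_ext hcl3 hPyc
  obtain ⟨re, hrec, hree⟩ := my_ext hcl2 hρc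
  obtain ⟨rze, hrzec, hrzee⟩ := my_ext hcl2 hρzc
  obtain ⟨qe, hqec, hqee⟩ := my_ext hcl2' hq₁
  have pe_eq : ∀ z ∈ Icc (0:ℝ) 1, ∀ y ∈ Icc (0:ℝ) 1, ∀ t ∈ Icc (0:ℝ) T,
      pe (z, y, t) = P z y t := fun z hz y hy t ht => hpee (z, y, t) ⟨hz, hy, ht⟩
  have pze_eq : ∀ z ∈ Icc (0:ℝ) 1, ∀ y ∈ Icc (0:ℝ) 1, ∀ t ∈ Icc (0:ℝ) T,
      pze (z, y, t) = Pz z y t := fun z hz y hy t ht => hpzee (z, y, t) ⟨hz, hy, ht⟩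
  have pye_eq : ∀ z ∈ Icc (0:ℝ) 1, ∀ y ∈ Icc (0:ℝ) 1, ∀ t ∈ Icc (0:ℝ) T,
      pye (z, y, t) = Py z y t := fun z hz y hy t ht => hpyee (z, y, t) ⟨hz, hy, ht⟩
  have re_eq : ∀ z ∈ Icc (0:ℝ) 1, ∀ t ∈ Icc (0:ℝ) T,
      re (z, t) = ρ z t := fun z hz t ht => hree (z, t) ⟨hz, ht⟩
  have rze_eq : ∀ z ∈ Icc (0:ℝ) 1, ∀ t ∈ Icc (0:ℝ) T,
      rze (z, t) = ρz z t := fun z hz t ht => hrzee (z, t) ⟨hz, ht⟩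
  have qe_eq : ∀ z ∈ Icc (0:ℝ) 1, ∀ y ∈ Icc (0:ℝ) 1,
      qe (z, y) = q₁ z y := fun z hz y hy => hqee (z, y) ⟨hz, hy⟩
  -- transferred hypotheses
  have Hsym : ∀ z ∈ Icc (0:ℝ) 1, ∀ t ∈ Icc (0:ℝ) T, pe (z, 0, t) = pe (0, z, t) := by
    intro z hz t ht
    rw [pe_eq z hz 0 h0m t ht, pe_eq 0 h0m z hz t ht, hPsymm z hz 0 h0m t ht]
  have HFt : ∀ z ∈ Icc (0:ℝ) 1, ∀ y ∈ Icc (0:ℝ) 1, ∀ t ∈ Icc (0:ℝ) T,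
      HasDerivWithinAt (fun t' => pe (z, y, t') * re (y, t') * re (z, t'))
        (He v R (fun a b c => pe (a, b, c)) (fun a b c => pze (a, b, c))
          (fun a b c => pye (a, b, c)) (fun a b => qe (a, b)) (fun a b => re (a, b))
          (fun a b => rze (a, b)) z y t) (Icc 0 T) t := by
    intro z hz y hy t ht
    have prod := ((hPt z hz y hy t ht).mul (hρt y hy t ht)).mul (hρt z hz t ht)
    have heq : ∀ t' ∈ Icc (0:ℝ) T,
        pe (z, y, t') * re (y, t') * re (z, t') = P z y t' * ρ y t' * ρ z t' := by
      intro t' ht'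
      rw [pe_eq z hz y hy t' ht', re_eq y hy t' ht', re_eq z hz t' ht']
    have prod2 := prod.congr heq (heq t ht)
    have e1 : Pt z y t = -(v * Pz z y t) - v * Py z y t - q₁ z y
        + (1 / R) * P z 0 t * P 0 y t := by linarith [hriccati z hz y hy t ht]
    have e2 : ρt y t = -(v * ρz y t) := by linarith [htransport y hy t ht]
    have e3 : ρt z t = -(v * ρz z t) := by linarith [htransport z hz t ht]
    have hval : He v R (fun a b c => pe (a, b, c)) (fun a b c => pze (a, b, c))
          (fun a b c => pye (a, b, c)) (fun a b => qe (a, b)) (fun a b => re (a, b))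
          (fun a b => rze (a, b)) z y t
        = (Pt z y t * ρ y t + P z y t * ρt y t) * ρ z t
          + P z y t * ρ y t * ρt z t := by
      unfold He
      beta_reduce
      rw [pe_eq z hz y hy t ht, pze_eq z hz y hy t ht, pye_eq z hz y hy t ht,
        re_eq y hy t ht, re_eq z hz t ht, rze_eq y hy t ht, rze_eq z hz t ht,
        pe_eq z hz 0 h0m t ht, pe_eq 0 h0m y hy t ht, qe_eq z hz y hy, e1, e2, e3]
      ring
    rw [hval]
    exact prod2
  have HFz : ∀ y ∈ Icc (0:ℝ) 1, ∀ t ∈ Icc (0:ℝ) T, ∀ z ∈ Icc (0:ℝ) 1,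
      HasDerivWithinAt (fun z' => pe (z', y, t) * re (y, t) * re (z', t))
        (pze (z, y, t) * re (y, t) * re (z, t) + pe (z, y, t) * re (y, t) * rze (z, t))
        (Icc 0 1) z := by
    intro y hy t ht z hz
    have d2 := ((hPz y hy t ht z hz).mul_const (ρ y t)).mul (hρz t ht z hz)
    have heq : ∀ z' ∈ Icc (0:ℝ) 1,
        pe (z', y, t) * re (y, t) * re (z', t) = P z' y t * ρ y t * ρ z' t := by
      intro z' hz'
      rw [pe_eq z' hz' y hy t ht, re_eq y hy t ht, re_eq z' hz' t ht]
    have d3 := d2.congr heq (heq z hz)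
    have hval : pze (z, y, t) * re (y, t) * re (z, t)
          + pe (z, y, t) * re (y, t) * rze (z, t)
        = Pz z y t * ρ y t * ρ z t + P z y t * ρ y t * ρz z t := by
      rw [pze_eq z hz y hy t ht, pe_eq z hz y hy t ht, re_eq y hy t ht,
        re_eq z hz t ht, rze_eq z hz t ht]
    rw [hval]
    exact d3
  have HFy : ∀ z ∈ Icc (0:ℝ) 1, ∀ t ∈ Icc (0:ℝ) T, ∀ y ∈ Icc (0:ℝ) 1,
      HasDerivWithinAt (fun y' => pe (z, y', t) * re (y', t) * re (z, t))
        (pye (z, y, t) * re (y, t) * re (z, t) + pe (z, y, t) * rze (y, t) * re (z, t))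
        (Icc 0 1) y := by
    intro z hz t ht y hy
    have d2 := ((hPy z hz t ht y hy).mul (hρz t ht y hy)).mul_const (ρ z t)
    have heq : ∀ y' ∈ Icc (0:ℝ) 1,
        pe (z, y', t) * re (y', t) * re (z, t) = P z y' t * ρ y' t * ρ z t := by
      intro y' hy'
      rw [pe_eq z hz y' hy' t ht, re_eq y' hy' t ht, re_eq z hz t ht]
    have d3 := d2.congr heq (heq y hy)
    have hval : pye (z, y, t) * re (y, t) * re (z, t)
          + pe (z, y, t) * rze (y, t) * re (z, t)
        = (Py z y t * ρ y t + P z y t * ρz y t) * ρ z t := by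
      rw [pye_eq z hz y hy t ht, pe_eq z hz y hy t ht, re_eq y hy t ht,
        re_eq z hz t ht, rze_eq y hy t ht]
      ring
    rw [hval]
    exact d3
  have Hbc1 : ∀ z ∈ Icc (0:ℝ) 1, ∀ t ∈ Icc (0:ℝ) T, pe (z, 1, t) = 0 := by
    intro z hz t ht; rw [pe_eq z hz 1 h1m t ht]; exact hPbc1 z hz t ht
  have Hbc2 : ∀ y ∈ Icc (0:ℝ) 1, ∀ t ∈ Icc (0:ℝ) T, pe (1, y, t) = 0 := by
    intro y hy t ht; rw [pe_eq 1 h1m y hy t ht]; exact hPbc2 y hy t ht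
  -- the key identity for the extensions
  have KEY : (∫ z in (0:ℝ)..1, ∫ y in (0:ℝ)..1, pe (z, y, T) * re (y, T) * re (z, T))
      - (∫ z in (0:ℝ)..1, ∫ y in (0:ℝ)..1, pe (z, y, 0) * re (y, 0) * re (z, 0))
      = ∫ t in (0:ℝ)..T,
          (2 * v * re (0, t) * (∫ y in (0:ℝ)..1, pe (0, y, t) * re (y, t))
            - (∫ z in (0:ℝ)..1, ∫ y in (0:ℝ)..1, qe (z, y) * re (y, t) * re (z, t))
            + (1/R) * (∫ y in (0:ℝ)..1, pe (0, y, t) * re (y, t))^2) :=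
    key_identity v T R hT (fun a b c => pe (a, b, c)) (fun a b c => pze (a, b, c))
      (fun a b c => pye (a, b, c)) (fun a b => qe (a, b)) (fun a b => re (a, b))
      (fun a b => rze (a, b)) (by fun_prop) (by fun_prop) (by fun_prop) (by fun_prop)
      (by fun_prop) (by fun_prop) Hsym HFt HFz HFy Hbc1 Hbc2
  -- continuity of the parametric integrals
  have hWc : Continuous fun t => ∫ y in (0:ℝ)..1, pe (0, y, t) * re (y, t) :=
    my_param (f := fun (t : ℝ) (y : ℝ) => pe (0, y, t) * re (y, t)) (by fun_prop) 0 1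
  have hQtc : Continuous fun t =>
      ∫ z in (0:ℝ)..1, ∫ y in (0:ℝ)..1, qe (z, y) * re (y, t) * re (z, t) :=
    my_param (f := fun (t : ℝ) (z : ℝ) =>
        ∫ y in (0:ℝ)..1, qe (z, y) * re (y, t) * re (z, t))
      (my_param (X := ℝ × ℝ) (f := fun (x : ℝ × ℝ) (y : ℝ) =>
        qe (x.2, y) * re (y, x.1) * re (x.2, x.1)) (by fun_prop) 0 1) 0 1
  have iQu : IntervalIntegrable (fun t =>
      (∫ z in (0:ℝ)..1, ∫ y in (0:ℝ)..1, qe (z, y) * re (y, t) * re (z, t))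
        + R * u t ^ 2) volume 0 T := by
    apply ContinuousOn.intervalIntegrable
    rw [uIcc_of_le hT']
    exact hQtc.continuousOn.add (continuousOn_const.mul (huc.pow 2))
  have iG : IntervalIntegrable (fun t =>
      2 * v * re (0, t) * (∫ y in (0:ℝ)..1, pe (0, y, t) * re (y, t))
        - (∫ z in (0:ℝ)..1, ∫ y in (0:ℝ)..1, qe (z, y) * re (y, t) * re (z, t))
        + (1/R) * (∫ y in (0:ℝ)..1, pe (0, y, t) * re (y, t))^2) volume 0 T := by
    apply Continuous.intervalIntegrable
    have hrec0 : Continuous fun t : ℝ => re (0, t) := hrec.comp (by fun_prop)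
    exact (((continuous_const.mul hrec0).mul hWc).sub hQtc).add
      (continuous_const.mul (hWc.pow 2))
  -- the completed square
  have sum_eq : (∫ t in (0:ℝ)..T,
        ((∫ z in (0:ℝ)..1, ∫ y in (0:ℝ)..1, qe (z, y) * re (y, t) * re (z, t))
          + R * u t ^ 2))
      + (∫ t in (0:ℝ)..T,
          (2 * v * re (0, t) * (∫ y in (0:ℝ)..1, pe (0, y, t) * re (y, t))
            - (∫ z in (0:ℝ)..1, ∫ y in (0:ℝ)..1, qe (z, y) * re (y, t) * re (z, t))
            + (1/R) * (∫ y in (0:ℝ)..1, pe (0, y, t) * re (y, t))^2))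
      = R * ∫ t in (0:ℝ)..T,
          (u t + (1 / R) * ∫ y in (0:ℝ)..1, pe (0, y, t) * re (y, t)) ^ 2 := by
    rw [← intervalIntegral.integral_add iQu iG, ← intervalIntegral.integral_const_mul]
    apply my_congr hT'
    intro t ht
    have h' : u t = v * re (0, t) := by rw [hu t, re_eq 0 h0m t ht]
    rw [h']
    field_simp
    ring
  -- convert the integrals appearing in the statement
  have cv1 : (∫ t in (0:ℝ)..T,
        ((∫ z in (0:ℝ)..1, ∫ y in (0:ℝ)..1, q₁ z y * ρ y t * ρ z t) + R * u t ^ 2))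
      = ∫ t in (0:ℝ)..T,
        ((∫ z in (0:ℝ)..1, ∫ y in (0:ℝ)..1, qe (z, y) * re (y, t) * re (z, t))
          + R * u t ^ 2) := by
    apply my_congr hT'
    intro t ht
    have : (∫ z in (0:ℝ)..1, ∫ y in (0:ℝ)..1, q₁ z y * ρ y t * ρ z t)
        = ∫ z in (0:ℝ)..1, ∫ y in (0:ℝ)..1, qe (z, y) * re (y, t) * re (z, t) := by
      apply my_congr h01
      intro z hz
      apply my_congr h01
      intro y hy
      rw [qe_eq z hz y hy, re_eq y hy t ht, re_eq z hz t ht]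
    rw [this]
  have cv2 : (∫ z in (0:ℝ)..1, ∫ y in (0:ℝ)..1, Pf z y * ρ y T * ρ z T)
      = ∫ z in (0:ℝ)..1, ∫ y in (0:ℝ)..1, pe (z, y, T) * re (y, T) * re (z, T) := by
    apply my_congr h01
    intro z hz
    apply my_congr h01
    intro y hy
    rw [pe_eq z hz y hy T hTm, re_eq y hy T hTm, re_eq z hz T hTm, hPterm z hz y hy]
  have cv3 : (∫ z in (0:ℝ)..1, ∫ y in (0:ℝ)..1, P z y 0 * ρ₀ y * ρ₀ z)
      = ∫ z in (0:ℝ)..1, ∫ y in (0:ℝ)..1, pe (z, y, 0) * re (y, 0) * re (z, 0) := by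
    apply my_congr h01
    intro z hz
    apply my_congr h01
    intro y hy
    rw [pe_eq z hz y hy 0 h0Tm, re_eq y hy 0 h0Tm, re_eq z hz 0 h0Tm, hinit y, hinit z]
  have cv4 : (∫ t in (0:ℝ)..T,
        (u t + (1 / R) * ∫ y in (0:ℝ)..1, P 0 y t * ρ y t) ^ 2)
      = ∫ t in (0:ℝ)..T,
        (u t + (1 / R) * ∫ y in (0:ℝ)..1, pe (0, y, t) * re (y, t)) ^ 2 := by
    apply my_congr hT'
    intro t ht
    have : (∫ y in (0:ℝ)..1, P 0 y t * ρ y t)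
        = ∫ y in (0:ℝ)..1, pe (0, y, t) * re (y, t) := by
      apply my_congr h01
      intro y hy
      rw [pe_eq 0 h0m y hy t ht, re_eq y hy t ht]
    rw [this]
  rw [hJ, cv1, cv2, cv3, cv4]
  linarith [KEY, sum_eq]
end

section
/- (Optimality of the state-feedback law of Theorem 2.) Under the hypotheses of the completion-of-squares identity (symmetric C¹ kernel P solving the differential Riccati equation with boundary conditions P(z,1,t) = P(1,y,t) = 0 and terminal condition P(·,·,T) = P_f), every continuously differentiable solution ρ of ∂_t ρ + v·∂_z ρ = 0 with continuous influx u(t) = v·ρ(0,t) and initial data ρ₀ satisfies J(ρ,u) ≥ (1/2)·∫₀¹∫₀¹ P(z,y,0) ρ₀(y) ρ₀(z) dy dz, with equality if and only if u(t) = −(1/R)·∫₀¹ P(0,y,t) ρ(y,t) dy for all t ∈ [0,T]. Hence the state-feedback control ũ*(t) = −(1/R)·∫₀¹ P(0,y,t) ρ(y,t) dy is optimal. -/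
open Set MeasureTheory

namespace SFO

/-- Continuity of a parametric interval integral over a compact parameter set. -/
lemma contOn_param {X : Type*} [TopologicalSpace X] [FirstCountableTopology X]
    {a b : ℝ} (hab : a ≤ b) {s : Set X} (hs : IsCompact s) (g : ℝ → X → ℝ)
    (hg : ContinuousOn (fun p : ℝ × X => g p.1 p.2) (Icc a b ×ˢ s)) :
    ContinuousOn (fun t => ∫ x in a..b, g x t) s := by
  obtain ⟨C, hC⟩ := (isCompact_Icc.prod hs).exists_bound_of_continuousOn hg
  intro t₀ ht₀
  apply intervalIntegral.continuousWithinAt_of_dominated_interval (bound := fun _ => C)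
  · filter_upwards [self_mem_nhdsWithin] with t ht
    rw [uIoc_of_le hab]
    apply ContinuousOn.aestronglyMeasurable ?_ measurableSet_Ioc
    exact (hg.comp ((continuous_id.prodMk continuous_const).continuousOn)
      (fun x hx => ⟨hx, ht⟩)).mono Ioc_subset_Icc_self
  · filter_upwards [self_mem_nhdsWithin] with t ht
    filter_upwards with x hx
    rw [uIoc_of_le hab] at hx
    exact hC (x, t) ⟨Ioc_subset_Icc_self hx, ht⟩
  · exact intervalIntegrable_const
  · filter_upwards with x hx
    rw [uIoc_of_le hab] at hx
    exact ((hg.comp ((continuous_const.prodMk continuous_id).continuousOn)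
      (fun t ht => ⟨Ioc_subset_Icc_self hx, ht⟩))).continuousWithinAt ht₀

/-- Fubini for interval integrals of a function continuous on a rectangle. -/
lemma swap2 {a b c d : ℝ} (hab : a ≤ b) (hcd : c ≤ d) (f : ℝ → ℝ → ℝ)
    (hf : ContinuousOn (fun p : ℝ × ℝ => f p.1 p.2) (Icc a b ×ˢ Icc c d)) :
    ∫ x in a..b, ∫ y in c..d, f x y = ∫ y in c..d, ∫ x in a..b, f x y := by
  have hi : IntegrableOn (fun p : ℝ × ℝ => f p.1 p.2) (Ioc a b ×ˢ Ioc c d)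
      ((volume : Measure ℝ).prod (volume : Measure ℝ)) := by
    rw [← MeasureTheory.Measure.volume_eq_prod]
    exact (hf.integrableOn_compact (isCompact_Icc.prod isCompact_Icc)).mono_set
      (prod_mono Ioc_subset_Icc_self Ioc_subset_Icc_self)
  rw [intervalIntegral.integral_of_le hab, intervalIntegral.integral_of_le hcd]
  simp_rw [intervalIntegral.integral_of_le hcd, intervalIntegral.integral_of_le hab]
  have := MeasureTheory.integral_integral_swap (μ := volume.restrict (Ioc a b))
    (ν := volume.restrict (Ioc c d)) (f := f) ?_
  · exact this
  · rw [Function.uncurry_def, Measure.prod_restrict]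
    exact hi

/-- FTC for a function with a derivative within `Icc a b`. -/
lemma ftc {a b : ℝ} (hab : a ≤ b) {f f' : ℝ → ℝ}
    (hc : ContinuousOn f (Icc a b)) (hc' : ContinuousOn f' (Icc a b))
    (hd : ∀ x ∈ Icc a b, HasDerivWithinAt f (f' x) (Icc a b) x) :
    ∫ x in a..b, f' x = f b - f a := by
  apply intervalIntegral.integral_eq_sub_of_hasDeriv_right_of_le hab hc
  · intro x hx
    exact ((hd x (Ioo_subset_Icc_self hx)).hasDerivAt
      (Icc_mem_nhds hx.1 hx.2)).hasDerivWithinAt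
  · exact hc'.intervalIntegrable_of_Icc hab

/-- A nonnegative continuous function on `[a,b]` with zero integral vanishes. -/
lemma zero_of_integral_zero {a b : ℝ} (hab : a < b) {f : ℝ → ℝ}
    (hc : ContinuousOn f (Icc a b)) (hnn : ∀ x ∈ Icc a b, 0 ≤ f x)
    (hz : ∫ x in a..b, f x = 0) : ∀ x ∈ Icc a b, f x = 0 := by
  have hfi : IntervalIntegrable f volume a b := hc.intervalIntegrable_of_Icc hab.le
  have hnn' : 0 ≤ᵐ[volume.restrict (Ioc a b)] f := by
    rw [Filter.EventuallyLE, ae_restrict_iff' measurableSet_Ioc]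
    filter_upwards with x hx
    exact hnn x (Ioc_subset_Icc_self hx)
  have h0 : f =ᵐ[volume.restrict (Ioc a b)] 0 :=
    (intervalIntegral.integral_eq_zero_iff_of_le_of_nonneg_ae hab.le hnn' hfi).mp hz
  have h0' : f =ᵐ[volume.restrict (Icc a b)] 0 := by
    rwa [MeasureTheory.Measure.restrict_congr_set Ioc_ae_eq_Icc] at h0
  exact MeasureTheory.Measure.eqOn_Icc_of_ae_eq volume hab.ne h0' hc continuousOn_const

/-- Composition helper for continuity of 3-variable functions. -/
lemma comp3 {F : ℝ → ℝ → ℝ → ℝ} {A B C : Set ℝ}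
    (hF : ContinuousOn (fun p : ℝ × ℝ × ℝ => F p.1 p.2.1 p.2.2) (A ×ˢ B ×ˢ C))
    {X : Type*} [TopologicalSpace X] {s : Set X} {a b c : X → ℝ}
    (ha : ContinuousOn a s) (hb : ContinuousOn b s) (hc : ContinuousOn c s)
    (hma : MapsTo a s A) (hmb : MapsTo b s B) (hmc : MapsTo c s C) :
    ContinuousOn (fun x => F (a x) (b x) (c x)) s :=
  hF.comp (f := fun x => (a x, b x, c x)) (ha.prodMk (hb.prodMk hc)) (fun x hx => ⟨hma hx, hmb hx, hmc hx⟩)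

/-- Composition helper for continuity of 2-variable functions. -/
lemma comp2 {F : ℝ → ℝ → ℝ} {A B : Set ℝ}
    (hF : ContinuousOn (fun p : ℝ × ℝ => F p.1 p.2) (A ×ˢ B))
    {X : Type*} [TopologicalSpace X] {s : Set X} {a b : X → ℝ}
    (ha : ContinuousOn a s) (hb : ContinuousOn b s)
    (hma : MapsTo a s A) (hmb : MapsTo b s B) :
    ContinuousOn (fun x => F (a x) (b x)) s :=
  hF.comp (f := fun x => (a x, b x)) (ha.prodMk hb) (fun x hx => ⟨hma hx, hmb hx⟩)

/-- Triple swap: pull the time integral outside. -/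
lemma swap3 {T : ℝ} (hT0 : 0 ≤ T) (g : ℝ → ℝ → ℝ → ℝ)
    (hg : ContinuousOn (fun p : ℝ × ℝ × ℝ => g p.1 p.2.1 p.2.2)
      (Icc 0 1 ×ˢ Icc 0 1 ×ˢ Icc 0 T)) :
    (∫ z in (0:ℝ)..1, ∫ y in (0:ℝ)..1, ∫ t in (0:ℝ)..T, g z y t)
      = ∫ t in (0:ℝ)..T, ∫ z in (0:ℝ)..1, ∫ y in (0:ℝ)..1, g z y t := by
  have h01 : (0:ℝ) ≤ 1 := by norm_num
  have s1 : ∀ z ∈ Icc (0:ℝ) 1,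
      (∫ y in (0:ℝ)..1, ∫ t in (0:ℝ)..T, g z y t)
        = ∫ t in (0:ℝ)..T, ∫ y in (0:ℝ)..1, g z y t :=
    fun z hz => swap2 h01 hT0 (fun y t => g z y t)
      (hg.comp ((continuous_const.prodMk continuous_id).continuousOn) (fun q hq => ⟨hz, hq⟩))
  rw [intervalIntegral.integral_congr
    (g := fun z => ∫ t in (0:ℝ)..T, ∫ y in (0:ℝ)..1, g z y t)
    (fun z hz => s1 z (by rwa [uIcc_of_le h01] at hz))]
  exact swap2 h01 hT0 (fun z t => ∫ y in (0:ℝ)..1, g z y t)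
    (contOn_param h01 (isCompact_Icc.prod isCompact_Icc) (fun y p => g p.1 y p.2)
      (hg.comp (((continuous_fst.comp continuous_snd).prodMk
        (continuous_fst.prodMk (continuous_snd.comp continuous_snd))).continuousOn)
        (fun q hq => ⟨hq.2.1, hq.1, hq.2.2⟩)))

end SFO

/-- optimality of the state-feedback law of Theorem 2: under the
hypotheses of the completion-of-squares identity (symmetric C¹ kernel `P` solving the
differential Riccati equation with `P(z,1,t) = P(1,y,t) = 0` and `P(·,·,T) = P_f`),
every continuously differentiable solution `ρ` of `∂_t ρ + v·∂_z ρ = 0` with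
continuous influx `u(t) = v·ρ(0,t)` and initial data `ρ₀` satisfies
`J(ρ,u) ≥ (1/2)∫₀¹∫₀¹ P(z,y,0) ρ₀(y) ρ₀(z) dy dz`, with equality if and only if
`u(t) = -(1/R)∫₀¹ P(0,y,t) ρ(y,t) dy` for all `t ∈ [0,T]`; hence the state-feedback
law is optimal. -/
theorem state_feedback_optimality
    (v T R : ℝ) (hv : 0 < v) (hT : 0 < T) (hR : 0 < R)
    (q₁ Pf : ℝ → ℝ → ℝ)
    (hq₁ : ContinuousOn (fun p : ℝ × ℝ => q₁ p.1 p.2) (Icc 0 1 ×ˢ Icc 0 1))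
    (hPfc : ContinuousOn (fun p : ℝ × ℝ => Pf p.1 p.2) (Icc 0 1 ×ˢ Icc 0 1))
    (P Pz Py Pt : ℝ → ℝ → ℝ → ℝ)
    (hPc : ContinuousOn (fun p : ℝ × ℝ × ℝ => P p.1 p.2.1 p.2.2)
      (Icc 0 1 ×ˢ Icc 0 1 ×ˢ Icc 0 T))
    (hPzc : ContinuousOn (fun p : ℝ × ℝ × ℝ => Pz p.1 p.2.1 p.2.2)
      (Icc 0 1 ×ˢ Icc 0 1 ×ˢ Icc 0 T))
    (hPyc : ContinuousOn (fun p : ℝ × ℝ × ℝ => Py p.1 p.2.1 p.2.2)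
      (Icc 0 1 ×ˢ Icc 0 1 ×ˢ Icc 0 T))
    (hPtc : ContinuousOn (fun p : ℝ × ℝ × ℝ => Pt p.1 p.2.1 p.2.2)
      (Icc 0 1 ×ˢ Icc 0 1 ×ˢ Icc 0 T))
    (hPsymm : ∀ z ∈ Icc (0:ℝ) 1, ∀ y ∈ Icc (0:ℝ) 1, ∀ t ∈ Icc (0:ℝ) T,
      P z y t = P y z t)
    (hPz : ∀ y ∈ Icc (0:ℝ) 1, ∀ t ∈ Icc (0:ℝ) T, ∀ z ∈ Icc (0:ℝ) 1,
      HasDerivWithinAt (fun z' => P z' y t) (Pz z y t) (Icc 0 1) z)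
    (hPy : ∀ z ∈ Icc (0:ℝ) 1, ∀ t ∈ Icc (0:ℝ) T, ∀ y ∈ Icc (0:ℝ) 1,
      HasDerivWithinAt (fun y' => P z y' t) (Py z y t) (Icc 0 1) y)
    (hPt : ∀ z ∈ Icc (0:ℝ) 1, ∀ y ∈ Icc (0:ℝ) 1, ∀ t ∈ Icc (0:ℝ) T,
      HasDerivWithinAt (fun t' => P z y t') (Pt z y t) (Icc 0 T) t)
    (hriccati : ∀ z ∈ Icc (0:ℝ) 1, ∀ y ∈ Icc (0:ℝ) 1, ∀ t ∈ Icc (0:ℝ) T,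
      Pt z y t + v * Pz z y t + v * Py z y t + q₁ z y
        - (1 / R) * P z 0 t * P 0 y t = 0)
    (hPbc1 : ∀ z ∈ Icc (0:ℝ) 1, ∀ t ∈ Icc (0:ℝ) T, P z 1 t = 0)
    (hPbc2 : ∀ y ∈ Icc (0:ℝ) 1, ∀ t ∈ Icc (0:ℝ) T, P 1 y t = 0)
    (hPterm : ∀ z ∈ Icc (0:ℝ) 1, ∀ y ∈ Icc (0:ℝ) 1, P z y T = Pf z y)
    (ρ ρz ρt : ℝ → ℝ → ℝ)
    (hρc : ContinuousOn (fun p : ℝ × ℝ => ρ p.1 p.2) (Icc 0 1 ×ˢ Icc 0 T))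
    (hρzc : ContinuousOn (fun p : ℝ × ℝ => ρz p.1 p.2) (Icc 0 1 ×ˢ Icc 0 T))
    (hρtc : ContinuousOn (fun p : ℝ × ℝ => ρt p.1 p.2) (Icc 0 1 ×ˢ Icc 0 T))
    (hρz : ∀ t ∈ Icc (0:ℝ) T, ∀ z ∈ Icc (0:ℝ) 1,
      HasDerivWithinAt (fun z' => ρ z' t) (ρz z t) (Icc 0 1) z)
    (hρt : ∀ z ∈ Icc (0:ℝ) 1, ∀ t ∈ Icc (0:ℝ) T,
      HasDerivWithinAt (fun t' => ρ z t') (ρt z t) (Icc 0 T) t)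
    (htransport : ∀ z ∈ Icc (0:ℝ) 1, ∀ t ∈ Icc (0:ℝ) T, ρt z t + v * ρz z t = 0)
    (u : ℝ → ℝ) (hu : ∀ t, u t = v * ρ 0 t) (huc : ContinuousOn u (Icc 0 T))
    (ρ₀ : ℝ → ℝ) (hinit : ∀ z, ρ₀ z = ρ z 0)
    (J : ℝ)
    (hJ : J = (1 / 2) * (∫ t in (0:ℝ)..T,
        ((∫ z in (0:ℝ)..1, ∫ y in (0:ℝ)..1, q₁ z y * ρ y t * ρ z t) + R * u t ^ 2)) +
      (1 / 2) * ∫ z in (0:ℝ)..1, ∫ y in (0:ℝ)..1, Pf z y * ρ y T * ρ z T) :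
    J ≥ (1 / 2) * (∫ z in (0:ℝ)..1, ∫ y in (0:ℝ)..1, P z y 0 * ρ₀ y * ρ₀ z) ∧
    (J = (1 / 2) * (∫ z in (0:ℝ)..1, ∫ y in (0:ℝ)..1, P z y 0 * ρ₀ y * ρ₀ z) ↔
      ∀ t ∈ Icc (0:ℝ) T, u t = -(1 / R) * ∫ y in (0:ℝ)..1, P 0 y t * ρ y t) := by
  simp only [hinit]
  have h01 : (0:ℝ) ≤ 1 := by norm_num
  have hT0 : (0:ℝ) ≤ T := hT.le
  have m0 : (0:ℝ) ∈ Icc (0:ℝ) 1 := ⟨le_refl _, h01⟩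
  have m1 : (1:ℝ) ∈ Icc (0:ℝ) 1 := ⟨h01, le_refl _⟩
  have mT0 : (0:ℝ) ∈ Icc (0:ℝ) T := ⟨le_refl _, hT0⟩
  have mTT : T ∈ Icc (0:ℝ) T := ⟨hT0, le_refl _⟩
  have hRne : R ≠ 0 := ne_of_gt hR
  have u1 : uIcc (0:ℝ) 1 = Icc 0 1 := uIcc_of_le h01
  have uT : uIcc (0:ℝ) T = Icc 0 T := uIcc_of_le hT0
  -- slice continuity facts
  have sρ : ∀ t ∈ Icc (0:ℝ) T, ContinuousOn (fun x => ρ x t) (Icc 0 1) :=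
    fun t ht => SFO.comp2 hρc continuousOn_id continuousOn_const (fun x hx => hx) (fun _ _ => ht)
  have sρ' : ∀ z ∈ Icc (0:ℝ) 1, ContinuousOn (fun x => ρ z x) (Icc 0 T) :=
    fun z hz => SFO.comp2 hρc continuousOn_const continuousOn_id (fun _ _ => hz) (fun x hx => hx)
  have sρz : ∀ t ∈ Icc (0:ℝ) T, ContinuousOn (fun x => ρz x t) (Icc 0 1) :=
    fun t ht => SFO.comp2 hρzc continuousOn_id continuousOn_const (fun x hx => hx) (fun _ _ => ht)
  have sρt' : ∀ z ∈ Icc (0:ℝ) 1, ContinuousOn (fun x => ρt z x) (Icc 0 T) :=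
    fun z hz => SFO.comp2 hρtc continuousOn_const continuousOn_id (fun _ _ => hz) (fun x hx => hx)
  have sP_t : ∀ z ∈ Icc (0:ℝ) 1, ∀ y ∈ Icc (0:ℝ) 1, ContinuousOn (fun x => P z y x) (Icc 0 T) :=
    fun z hz y hy => SFO.comp3 hPc continuousOn_const continuousOn_const continuousOn_id
      (fun _ _ => hz) (fun _ _ => hy) (fun x hx => hx)
  have sPt_t : ∀ z ∈ Icc (0:ℝ) 1, ∀ y ∈ Icc (0:ℝ) 1, ContinuousOn (fun x => Pt z y x) (Icc 0 T) :=
    fun z hz y hy => SFO.comp3 hPtc continuousOn_const continuousOn_const continuousOn_id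
      (fun _ _ => hz) (fun _ _ => hy) (fun x hx => hx)
  have sP_y : ∀ z ∈ Icc (0:ℝ) 1, ∀ t ∈ Icc (0:ℝ) T, ContinuousOn (fun x => P z x t) (Icc 0 1) :=
    fun z hz t ht => SFO.comp3 hPc continuousOn_const continuousOn_id continuousOn_const
      (fun _ _ => hz) (fun x hx => hx) (fun _ _ => ht)
  have sP_z : ∀ y ∈ Icc (0:ℝ) 1, ∀ t ∈ Icc (0:ℝ) T, ContinuousOn (fun x => P x y t) (Icc 0 1) :=
    fun y hy t ht => SFO.comp3 hPc continuousOn_id continuousOn_const continuousOn_const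
      (fun x hx => hx) (fun _ _ => hy) (fun _ _ => ht)
  have sPy_y : ∀ z ∈ Icc (0:ℝ) 1, ∀ t ∈ Icc (0:ℝ) T, ContinuousOn (fun x => Py z x t) (Icc 0 1) :=
    fun z hz t ht => SFO.comp3 hPyc continuousOn_const continuousOn_id continuousOn_const
      (fun _ _ => hz) (fun x hx => hx) (fun _ _ => ht)
  have sq : ∀ z ∈ Icc (0:ℝ) 1, ContinuousOn (fun x => q₁ z x) (Icc 0 1) :=
    fun z hz => SFO.comp2 hq₁ continuousOn_const continuousOn_id (fun _ _ => hz) (fun x hx => hx)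
  have sPf : ∀ z ∈ Icc (0:ℝ) 1, ContinuousOn (fun x => Pf z x) (Icc 0 1) :=
    fun z hz => SFO.comp2 hPfc continuousOn_const continuousOn_id (fun _ _ => hz) (fun x hx => hx)
  -- equality of cross derivatives from symmetry
  have hPzPy : ∀ z ∈ Icc (0:ℝ) 1, ∀ y ∈ Icc (0:ℝ) 1, ∀ t ∈ Icc (0:ℝ) T,
      Pz z y t = Py y z t := by
    intro z hz y hy t ht
    have hud : UniqueDiffWithinAt ℝ (Icc (0:ℝ) 1) z :=
      (uniqueDiffOn_Icc (by norm_num : (0:ℝ) < 1)) z hz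
    have h1 : HasDerivWithinAt (fun z' => P y z' t) (Pz z y t) (Icc 0 1) z :=
      (hPz y hy t ht z hz).congr (fun x hx => hPsymm y hy x hx t ht)
        (hPsymm y hy z hz t ht)
    have h2 := hPy y hy t ht z hz
    rw [← h1.derivWithin hud, ← h2.derivWithin hud]
  -- FTC in time
  have key_t : ∀ z ∈ Icc (0:ℝ) 1, ∀ y ∈ Icc (0:ℝ) 1,
      (∫ t in (0:ℝ)..T, ((Pt z y t * ρ y t + P z y t * ρt y t) * ρ z t
          + P z y t * ρ y t * ρt z t))
        = Pf z y * ρ y T * ρ z T - P z y 0 * ρ y 0 * ρ z 0 := by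
    intro z hz y hy
    have hc1 : ContinuousOn (fun x => P z y x * ρ y x * ρ z x) (Icc 0 T) :=
      ((sP_t z hz y hy).mul (sρ' y hy)).mul (sρ' z hz)
    have hc2 : ContinuousOn (fun x => (Pt z y x * ρ y x + P z y x * ρt y x) * ρ z x
        + P z y x * ρ y x * ρt z x) (Icc 0 T) :=
      ((((sPt_t z hz y hy).mul (sρ' y hy)).add ((sP_t z hz y hy).mul (sρt' y hy))).mul
        (sρ' z hz)).add (((sP_t z hz y hy).mul (sρ' y hy)).mul (sρt' z hz))
    have hint := SFO.ftc hT0 hc1 hc2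
      (fun x hx => ((hPt z hz y hy x hx).mul (hρt y hy x hx)).mul (hρt z hz x hx))
    rw [hint, hPterm z hz y hy]
  -- swap of the triple integral
  have hswap : (∫ z in (0:ℝ)..1, ∫ y in (0:ℝ)..1, ∫ t in (0:ℝ)..T,
        ((Pt z y t * ρ y t + P z y t * ρt y t) * ρ z t + P z y t * ρ y t * ρt z t))
      = ∫ t in (0:ℝ)..T, ∫ z in (0:ℝ)..1, ∫ y in (0:ℝ)..1,
        ((Pt z y t * ρ y t + P z y t * ρt y t) * ρ z t + P z y t * ρ y t * ρt z t) := by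
    have cρ21 : ContinuousOn (fun p : ℝ × ℝ × ℝ => ρ p.2.1 p.2.2)
        (Icc 0 1 ×ˢ Icc 0 1 ×ˢ Icc 0 T) :=
      SFO.comp2 hρc (continuous_fst.comp continuous_snd).continuousOn
        (continuous_snd.comp continuous_snd).continuousOn
        (fun p hp => hp.2.1) (fun p hp => hp.2.2)
    have cρt21 : ContinuousOn (fun p : ℝ × ℝ × ℝ => ρt p.2.1 p.2.2)
        (Icc 0 1 ×ˢ Icc 0 1 ×ˢ Icc 0 T) :=
      SFO.comp2 hρtc (continuous_fst.comp continuous_snd).continuousOn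
        (continuous_snd.comp continuous_snd).continuousOn
        (fun p hp => hp.2.1) (fun p hp => hp.2.2)
    have cρ1 : ContinuousOn (fun p : ℝ × ℝ × ℝ => ρ p.1 p.2.2)
        (Icc 0 1 ×ˢ Icc 0 1 ×ˢ Icc 0 T) :=
      SFO.comp2 hρc continuous_fst.continuousOn
        (continuous_snd.comp continuous_snd).continuousOn
        (fun p hp => hp.1) (fun p hp => hp.2.2)
    have cρt1 : ContinuousOn (fun p : ℝ × ℝ × ℝ => ρt p.1 p.2.2)
        (Icc 0 1 ×ˢ Icc 0 1 ×ˢ Icc 0 T) :=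
      SFO.comp2 hρtc continuous_fst.continuousOn
        (continuous_snd.comp continuous_snd).continuousOn
        (fun p hp => hp.1) (fun p hp => hp.2.2)
    exact SFO.swap3 hT0 (fun z y t =>
        (Pt z y t * ρ y t + P z y t * ρt y t) * ρ z t + P z y t * ρ y t * ρt z t)
      ((((hPtc.mul cρ21).add (hPc.mul cρt21)).mul cρ1).add ((hPc.mul cρ21).mul cρt1))
  -- left-hand side evaluation
  have hLHS : (∫ z in (0:ℝ)..1, ∫ y in (0:ℝ)..1, ∫ t in (0:ℝ)..T,
        ((Pt z y t * ρ y t + P z y t * ρt y t) * ρ z t + P z y t * ρ y t * ρt z t))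
      = (∫ z in (0:ℝ)..1, ∫ y in (0:ℝ)..1, Pf z y * ρ y T * ρ z T)
        - (∫ z in (0:ℝ)..1, ∫ y in (0:ℝ)..1, P z y 0 * ρ y 0 * ρ z 0) := by
    have O1 : IntervalIntegrable (fun z => ∫ y in (0:ℝ)..1, Pf z y * ρ y T * ρ z T)
        volume 0 1 :=
      (SFO.contOn_param h01 isCompact_Icc (fun y z => Pf z y * ρ y T * ρ z T)
        (((SFO.comp2 hPfc continuous_snd.continuousOn continuous_fst.continuousOn
            (fun p hp => hp.2) (fun p hp => hp.1)).mul
          (SFO.comp2 hρc continuous_fst.continuousOn continuousOn_const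
            (fun p hp => hp.1) (fun _ _ => mTT))).mul
          (SFO.comp2 hρc continuous_snd.continuousOn continuousOn_const
            (fun p hp => hp.2) (fun _ _ => mTT)))).intervalIntegrable_of_Icc h01
    have O2 : IntervalIntegrable (fun z => ∫ y in (0:ℝ)..1, P z y 0 * ρ y 0 * ρ z 0)
        volume 0 1 :=
      (SFO.contOn_param h01 isCompact_Icc (fun y z => P z y 0 * ρ y 0 * ρ z 0)
        (((SFO.comp3 hPc continuous_snd.continuousOn continuous_fst.continuousOn
            continuousOn_const (fun p hp => hp.2) (fun p hp => hp.1) (fun _ _ => mT0)).mul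
          (SFO.comp2 hρc continuous_fst.continuousOn continuousOn_const
            (fun p hp => hp.1) (fun _ _ => mT0))).mul
          (SFO.comp2 hρc continuous_snd.continuousOn continuousOn_const
            (fun p hp => hp.2) (fun _ _ => mT0)))).intervalIntegrable_of_Icc h01
    rw [← intervalIntegral.integral_sub O1 O2]
    apply intervalIntegral.integral_congr
    intro z hz; rw [u1] at hz; beta_reduce
    have I1 : IntervalIntegrable (fun y => Pf z y * ρ y T * ρ z T) volume 0 1 :=
      (((sPf z hz).mul (sρ T mTT)).mul continuousOn_const).intervalIntegrable_of_Icc h01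
    have I2 : IntervalIntegrable (fun y => P z y 0 * ρ y 0 * ρ z 0) volume 0 1 :=
      (((sP_y z hz 0 mT0).mul (sρ 0 mT0)).mul continuousOn_const).intervalIntegrable_of_Icc h01
    rw [← intervalIntegral.integral_sub I1 I2]
    apply intervalIntegral.integral_congr
    intro y hy; rw [u1] at hy; beta_reduce
    exact key_t z hz y hy
  -- pointwise-in-time evaluation of the inner double integral
  have hF : ∀ t ∈ Icc (0:ℝ) T,
      (∫ z in (0:ℝ)..1, ∫ y in (0:ℝ)..1,
        ((Pt z y t * ρ y t + P z y t * ρt y t) * ρ z t + P z y t * ρ y t * ρt z t))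
      = (1/R) * (∫ y in (0:ℝ)..1, P 0 y t * ρ y t)^2
        - (∫ z in (0:ℝ)..1, ∫ y in (0:ℝ)..1, q₁ z y * ρ y t * ρ z t)
        + 2 * (u t * (∫ y in (0:ℝ)..1, P 0 y t * ρ y t)) := by
    intro t ht
    -- pointwise rewriting of the integrand via Riccati + transport
    have hpt : ∀ z ∈ Icc (0:ℝ) 1, ∀ y ∈ Icc (0:ℝ) 1,
        (Pt z y t * ρ y t + P z y t * ρt y t) * ρ z t + P z y t * ρ y t * ρt z t
        = (1/R) * (P z 0 t * ρ z t) * (P 0 y t * ρ y t)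
          - q₁ z y * ρ y t * ρ z t
          - (v * ρ y t) * (Py y z t * ρ z t + P y z t * ρz z t)
          - (v * ρ z t) * (Py z y t * ρ y t + P z y t * ρz y t) := by
      intro z hz y hy
      have hr := hriccati z hz y hy t ht
      have h1 := htransport y hy t ht
      have h2 := htransport z hz t ht
      have h3 := hPzPy z hz y hy t ht
      have h4 := hPsymm z hz y hy t ht
      linear_combination (ρ y t * ρ z t) * hr + (P z y t * ρ z t) * h1
        + (P z y t * ρ y t) * h2 - (v * ρ y t * ρ z t) * h3 - (v * ρ y t * ρz z t) * h4
    -- symmetrized feedback integral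
    have hWz : (∫ x in (0:ℝ)..1, P x 0 t * ρ x t)
        = ∫ y in (0:ℝ)..1, P 0 y t * ρ y t := by
      apply intervalIntegral.integral_congr
      intro x hx; rw [u1] at hx; beta_reduce
      rw [hPsymm x hx 0 m0 t ht]
    -- inner integral over y, for fixed z
    have inner : ∀ z ∈ Icc (0:ℝ) 1,
        (∫ y in (0:ℝ)..1,
          ((Pt z y t * ρ y t + P z y t * ρt y t) * ρ z t + P z y t * ρ y t * ρt z t))
        = (1/R) * (P z 0 t * ρ z t) * (∫ y in (0:ℝ)..1, P 0 y t * ρ y t)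
          - (∫ y in (0:ℝ)..1, q₁ z y * ρ y t * ρ z t)
          - (∫ y in (0:ℝ)..1, (v * ρ y t) * (Py y z t * ρ z t + P y z t * ρz z t))
          + (v * ρ z t) * (P z 0 t * ρ 0 t) := by
      intro z hz
      have i1 : IntervalIntegrable
          (fun y => (1/R) * (P z 0 t * ρ z t) * (P 0 y t * ρ y t)) volume 0 1 :=
        (continuousOn_const.mul ((sP_y 0 m0 t ht).mul (sρ t ht))).intervalIntegrable_of_Icc h01
      have i2 : IntervalIntegrable (fun y => q₁ z y * ρ y t * ρ z t) volume 0 1 :=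
        (((sq z hz).mul (sρ t ht)).mul continuousOn_const).intervalIntegrable_of_Icc h01
      have i3 : IntervalIntegrable
          (fun y => (v * ρ y t) * (Py y z t * ρ z t + P y z t * ρz z t)) volume 0 1 :=
        ((continuousOn_const.mul (sρ t ht)).mul
          (((SFO.comp3 hPyc continuousOn_id continuousOn_const continuousOn_const
              (fun x hx => hx) (fun _ _ => hz) (fun _ _ => ht)).mul continuousOn_const).add
            ((sP_z z hz t ht).mul continuousOn_const))).intervalIntegrable_of_Icc h01
      have i4 : IntervalIntegrable
          (fun y => (v * ρ z t) * (Py z y t * ρ y t + P z y t * ρz y t)) volume 0 1 :=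
        (continuousOn_const.mul (((sPy_y z hz t ht).mul (sρ t ht)).add
          ((sP_y z hz t ht).mul (sρz t ht)))).intervalIntegrable_of_Icc h01
      rw [intervalIntegral.integral_congr (g := fun y =>
          (1/R) * (P z 0 t * ρ z t) * (P 0 y t * ρ y t)
          - q₁ z y * ρ y t * ρ z t
          - (v * ρ y t) * (Py y z t * ρ z t + P y z t * ρz z t)
          - (v * ρ z t) * (Py z y t * ρ y t + P z y t * ρz y t))
        (fun y hy => by rw [u1] at hy; beta_reduce; exact hpt z hz y hy)]
      rw [intervalIntegral.integral_sub ((i1.sub i2).sub i3) i4,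
          intervalIntegral.integral_sub (i1.sub i2) i3,
          intervalIntegral.integral_sub i1 i2]
      have e1 : (∫ y in (0:ℝ)..1, (1/R) * (P z 0 t * ρ z t) * (P 0 y t * ρ y t))
          = (1/R) * (P z 0 t * ρ z t) * (∫ y in (0:ℝ)..1, P 0 y t * ρ y t) :=
        intervalIntegral.integral_const_mul _ _
      have eftc : (∫ y in (0:ℝ)..1, (Py z y t * ρ y t + P z y t * ρz y t))
          = P z 1 t * ρ 1 t - P z 0 t * ρ 0 t :=
        SFO.ftc h01 ((sP_y z hz t ht).mul (sρ t ht))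
          (((sPy_y z hz t ht).mul (sρ t ht)).add ((sP_y z hz t ht).mul (sρz t ht)))
          (fun y hy => (hPy z hz t ht y hy).mul (hρz t ht y hy))
      have e4 : (∫ y in (0:ℝ)..1, (v * ρ z t) * (Py z y t * ρ y t + P z y t * ρz y t))
          = (v * ρ z t) * (P z 1 t * ρ 1 t - P z 0 t * ρ 0 t) := by
        rw [intervalIntegral.integral_const_mul, eftc]
      rw [e1, e4, hPbc1 z hz t ht]
      ring
    -- outer integrability of the four pieces
    have Oc1 : ContinuousOn (fun z => (1/R) * (P z 0 t * ρ z t)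
        * (∫ y in (0:ℝ)..1, P 0 y t * ρ y t)) (Icc 0 1) :=
      (continuousOn_const.mul ((sP_z 0 m0 t ht).mul (sρ t ht))).mul continuousOn_const
    have Oc2 : ContinuousOn (fun z => ∫ y in (0:ℝ)..1, q₁ z y * ρ y t * ρ z t) (Icc 0 1) :=
      SFO.contOn_param h01 isCompact_Icc (fun y z => q₁ z y * ρ y t * ρ z t)
        (((SFO.comp2 hq₁ continuous_snd.continuousOn continuous_fst.continuousOn
            (fun p hp => hp.2) (fun p hp => hp.1)).mul
          (SFO.comp2 hρc continuous_fst.continuousOn continuousOn_const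
            (fun p hp => hp.1) (fun _ _ => ht))).mul
          (SFO.comp2 hρc continuous_snd.continuousOn continuousOn_const
            (fun p hp => hp.2) (fun _ _ => ht)))
    have Oc3 : ContinuousOn (fun z => ∫ y in (0:ℝ)..1,
        (v * ρ y t) * (Py y z t * ρ z t + P y z t * ρz z t)) (Icc 0 1) :=
      SFO.contOn_param h01 isCompact_Icc
        (fun y z => (v * ρ y t) * (Py y z t * ρ z t + P y z t * ρz z t))
        ((continuousOn_const.mul (SFO.comp2 hρc continuous_fst.continuousOn continuousOn_const
            (fun p hp => hp.1) (fun _ _ => ht))).mul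
          (((SFO.comp3 hPyc continuous_fst.continuousOn continuous_snd.continuousOn
              continuousOn_const (fun p hp => hp.1) (fun p hp => hp.2) (fun _ _ => ht)).mul
            (SFO.comp2 hρc continuous_snd.continuousOn continuousOn_const
              (fun p hp => hp.2) (fun _ _ => ht))).add
           ((SFO.comp3 hPc continuous_fst.continuousOn continuous_snd.continuousOn
              continuousOn_const (fun p hp => hp.1) (fun p hp => hp.2) (fun _ _ => ht)).mul
            (SFO.comp2 hρzc continuous_snd.continuousOn continuousOn_const
              (fun p hp => hp.2) (fun _ _ => ht)))))
    have Oc4 : ContinuousOn (fun z => (v * ρ z t) * (P z 0 t * ρ 0 t)) (Icc 0 1) :=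
      (continuousOn_const.mul (sρ t ht)).mul ((sP_z 0 m0 t ht).mul continuousOn_const)
    rw [intervalIntegral.integral_congr (g := fun z =>
        (1/R) * (P z 0 t * ρ z t) * (∫ y in (0:ℝ)..1, P 0 y t * ρ y t)
        - (∫ y in (0:ℝ)..1, q₁ z y * ρ y t * ρ z t)
        - (∫ y in (0:ℝ)..1, (v * ρ y t) * (Py y z t * ρ z t + P y z t * ρz z t))
        + (v * ρ z t) * (P z 0 t * ρ 0 t))
      (fun z hz => by rw [u1] at hz; beta_reduce; exact inner z hz)]
    rw [intervalIntegral.integral_add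
        (((Oc1.intervalIntegrable_of_Icc h01).sub (Oc2.intervalIntegrable_of_Icc h01)).sub
          (Oc3.intervalIntegrable_of_Icc h01)) (Oc4.intervalIntegrable_of_Icc h01),
        intervalIntegral.integral_sub
        ((Oc1.intervalIntegrable_of_Icc h01).sub (Oc2.intervalIntegrable_of_Icc h01))
        (Oc3.intervalIntegrable_of_Icc h01),
        intervalIntegral.integral_sub (Oc1.intervalIntegrable_of_Icc h01)
        (Oc2.intervalIntegrable_of_Icc h01)]
    -- evaluate the three non-q pieces
    have E1 : (∫ z in (0:ℝ)..1, (1/R) * (P z 0 t * ρ z t)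
        * (∫ y in (0:ℝ)..1, P 0 y t * ρ y t))
        = (1/R) * (∫ y in (0:ℝ)..1, P 0 y t * ρ y t)^2 := by
      rw [intervalIntegral.integral_mul_const, intervalIntegral.integral_const_mul, hWz]
      ring
    have E3 : (∫ z in (0:ℝ)..1, ∫ y in (0:ℝ)..1,
          (v * ρ y t) * (Py y z t * ρ z t + P y z t * ρz z t))
        = (-(v * ρ 0 t)) * (∫ y in (0:ℝ)..1, P 0 y t * ρ y t) := by
      rw [SFO.swap2 h01 h01 (fun z y => (v * ρ y t) * (Py y z t * ρ z t + P y z t * ρz z t))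
        ((continuousOn_const.mul (SFO.comp2 hρc continuous_snd.continuousOn continuousOn_const
            (fun p hp => hp.2) (fun _ _ => ht))).mul
          (((SFO.comp3 hPyc continuous_snd.continuousOn continuous_fst.continuousOn
              continuousOn_const (fun p hp => hp.2) (fun p hp => hp.1) (fun _ _ => ht)).mul
            (SFO.comp2 hρc continuous_fst.continuousOn continuousOn_const
              (fun p hp => hp.1) (fun _ _ => ht))).add
           ((SFO.comp3 hPc continuous_snd.continuousOn continuous_fst.continuousOn
              continuousOn_const (fun p hp => hp.2) (fun p hp => hp.1) (fun _ _ => ht)).mul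
            (SFO.comp2 hρzc continuous_fst.continuousOn continuousOn_const
              (fun p hp => hp.1) (fun _ _ => ht)))))]
      rw [intervalIntegral.integral_congr (g := fun y => (-(v * ρ 0 t)) * (P 0 y t * ρ y t))
        (fun y hy => by
          rw [u1] at hy; beta_reduce
          rw [intervalIntegral.integral_const_mul,
            SFO.ftc (f := fun x => P y x t * ρ x t)
              (f' := fun x => Py y x t * ρ x t + P y x t * ρz x t) h01 ((sP_y y hy t ht).mul (sρ t ht))
              (((sPy_y y hy t ht).mul (sρ t ht)).add ((sP_y y hy t ht).mul (sρz t ht)))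
              (fun x hx => (hPy y hy t ht x hx).mul (hρz t ht x hx)),
            hPbc1 y hy t ht, hPsymm y hy 0 m0 t ht]
          ring)]
      rw [intervalIntegral.integral_const_mul]
    have E4 : (∫ z in (0:ℝ)..1, (v * ρ z t) * (P z 0 t * ρ 0 t))
        = (v * ρ 0 t) * (∫ y in (0:ℝ)..1, P 0 y t * ρ y t) := by
      rw [intervalIntegral.integral_congr (g := fun z => (v * ρ 0 t) * (P 0 z t * ρ z t))
        (fun z hz => by rw [u1] at hz; beta_reduce; rw [hPsymm z hz 0 m0 t ht]; ring)]
      rw [intervalIntegral.integral_const_mul]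
    rw [E1, E3, E4, hu t]
    ring
  -- continuity of the feedback integral and the q-term
  have hwc : ContinuousOn (fun t => ∫ y in (0:ℝ)..1, P 0 y t * ρ y t) (Icc 0 T) :=
    SFO.contOn_param h01 isCompact_Icc (fun y t => P 0 y t * ρ y t)
      ((SFO.comp3 hPc continuousOn_const continuous_fst.continuousOn
          continuous_snd.continuousOn (fun _ _ => m0) (fun p hp => hp.1) (fun p hp => hp.2)).mul
        (SFO.comp2 hρc continuous_fst.continuousOn continuous_snd.continuousOn
          (fun p hp => hp.1) (fun p hp => hp.2)))
  have hQc : ContinuousOn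
      (fun t => ∫ z in (0:ℝ)..1, ∫ y in (0:ℝ)..1, q₁ z y * ρ y t * ρ z t) (Icc 0 T) :=
    SFO.contOn_param h01 isCompact_Icc
      (fun z t => ∫ y in (0:ℝ)..1, q₁ z y * ρ y t * ρ z t)
      (SFO.contOn_param h01 (isCompact_Icc.prod isCompact_Icc)
        (fun y p => q₁ p.1 y * ρ y p.2 * ρ p.1 p.2)
        (((SFO.comp2 hq₁ (continuous_fst.comp continuous_snd).continuousOn
            continuous_fst.continuousOn (fun p hp => hp.2.1) (fun p hp => hp.1)).mul
          (SFO.comp2 hρc continuous_fst.continuousOn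
            (continuous_snd.comp continuous_snd).continuousOn
            (fun p hp => hp.1) (fun p hp => hp.2.2))).mul
          (SFO.comp2 hρc (continuous_fst.comp continuous_snd).continuousOn
            (continuous_snd.comp continuous_snd).continuousOn
            (fun p hp => hp.2.1) (fun p hp => hp.2.2))))
  have hIntSq : ContinuousOn
      (fun t => R * (u t + (1/R) * ∫ y in (0:ℝ)..1, P 0 y t * ρ y t)^2) (Icc 0 T) :=
    continuousOn_const.mul ((huc.add (continuousOn_const.mul hwc)).pow 2)
  -- the key completion-of-squares identity
  have hJkey : J = (1/2) * (∫ z in (0:ℝ)..1, ∫ y in (0:ℝ)..1, P z y 0 * ρ y 0 * ρ z 0)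
      + (1/2) * ∫ t in (0:ℝ)..T,
          R * (u t + (1/R) * ∫ y in (0:ℝ)..1, P 0 y t * ρ y t)^2 := by
    have hpoint : ∀ t ∈ uIcc (0:ℝ) T,
        ((∫ z in (0:ℝ)..1, ∫ y in (0:ℝ)..1, q₁ z y * ρ y t * ρ z t) + R * u t ^ 2)
        = R * (u t + (1/R) * ∫ y in (0:ℝ)..1, P 0 y t * ρ y t)^2
          - ((1/R) * (∫ y in (0:ℝ)..1, P 0 y t * ρ y t)^2
             - (∫ z in (0:ℝ)..1, ∫ y in (0:ℝ)..1, q₁ z y * ρ y t * ρ z t)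
             + 2 * (u t * (∫ y in (0:ℝ)..1, P 0 y t * ρ y t))) := by
      intro t _
      field_simp
      ring
    have hFc : ContinuousOn (fun t => (1/R) * (∫ y in (0:ℝ)..1, P 0 y t * ρ y t)^2
        - (∫ z in (0:ℝ)..1, ∫ y in (0:ℝ)..1, q₁ z y * ρ y t * ρ z t)
        + 2 * (u t * (∫ y in (0:ℝ)..1, P 0 y t * ρ y t))) (Icc 0 T) :=
      ((continuousOn_const.mul (hwc.pow 2)).sub hQc).add (continuousOn_const.mul (huc.mul hwc))
    have hstep : (∫ t in (0:ℝ)..T,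
          ((∫ z in (0:ℝ)..1, ∫ y in (0:ℝ)..1, q₁ z y * ρ y t * ρ z t) + R * u t ^ 2))
        = (∫ t in (0:ℝ)..T, R * (u t + (1/R) * ∫ y in (0:ℝ)..1, P 0 y t * ρ y t)^2)
          - ∫ t in (0:ℝ)..T, ((1/R) * (∫ y in (0:ℝ)..1, P 0 y t * ρ y t)^2
             - (∫ z in (0:ℝ)..1, ∫ y in (0:ℝ)..1, q₁ z y * ρ y t * ρ z t)
             + 2 * (u t * (∫ y in (0:ℝ)..1, P 0 y t * ρ y t))) := by
      rw [intervalIntegral.integral_congr hpoint]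
      exact intervalIntegral.integral_sub (hIntSq.intervalIntegrable_of_Icc hT0)
        (hFc.intervalIntegrable_of_Icc hT0)
    have hFeq : (∫ t in (0:ℝ)..T, ((1/R) * (∫ y in (0:ℝ)..1, P 0 y t * ρ y t)^2
          - (∫ z in (0:ℝ)..1, ∫ y in (0:ℝ)..1, q₁ z y * ρ y t * ρ z t)
          + 2 * (u t * (∫ y in (0:ℝ)..1, P 0 y t * ρ y t))))
        = (∫ z in (0:ℝ)..1, ∫ y in (0:ℝ)..1, Pf z y * ρ y T * ρ z T)
          - (∫ z in (0:ℝ)..1, ∫ y in (0:ℝ)..1, P z y 0 * ρ y 0 * ρ z 0) := by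
      rw [← hLHS, hswap]
      apply intervalIntegral.integral_congr
      intro t ht; rw [uT] at ht; beta_reduce
      exact (hF t ht).symm
    rw [hJ, hstep, hFeq]
    ring
  have hS_nonneg : 0 ≤ ∫ t in (0:ℝ)..T,
      R * (u t + (1/R) * ∫ y in (0:ℝ)..1, P 0 y t * ρ y t)^2 :=
    intervalIntegral.integral_nonneg hT0 (fun x _ => by positivity)
  constructor
  · rw [hJkey]; linarith
  · constructor
    · intro hEq
      have hS0 : (∫ t in (0:ℝ)..T,
          R * (u t + (1/R) * ∫ y in (0:ℝ)..1, P 0 y t * ρ y t)^2) = 0 := by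
        rw [hJkey] at hEq; linarith
      have hzero := SFO.zero_of_integral_zero hT hIntSq (fun x _ => by positivity) hS0
      intro t ht
      have h2 := hzero t ht
      have h3 : u t + (1/R) * (∫ y in (0:ℝ)..1, P 0 y t * ρ y t) = 0 := by
        rcases mul_eq_zero.mp h2 with h | h
        · exact absurd h hRne
        · exact (pow_eq_zero_iff two_ne_zero).mp h
      linarith
    · intro hfb
      have hS0 : (∫ t in (0:ℝ)..T,
          R * (u t + (1/R) * ∫ y in (0:ℝ)..1, P 0 y t * ρ y t)^2) = 0 := by
        rw [intervalIntegral.integral_congr (g := fun _ => (0:ℝ))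
          (fun t ht => by rw [uT] at ht; rw [hfb t ht]; ring)]
        simp
      rw [hJkey, hS0]; ring
end
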